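/- arXiv:1701.05705 — 9 statements merged into one kernel-verified Lean document; each statement's English description precedes it below -/
import Mathlib

section
/- Let {D₁,…,Dₘ} be a nontrivial (v,m,k,λ)-SEDF in an abelian group G and let D = D₁ ∪ ⋯ ∪ Dₘ. Then there exists a nonprincipal character χ of G with χ(D) ≠ 0. -/
open Finset

/-- `{D j}` is a `(v, m, k, lam)`-strong external difference family in the
abelian group `G`: mutually disjoint `k`-subsets whose defining group-ring
identity `D_j · (∑_{i≠j} D_i^{(-1)}) = lam (G - 1)` holds in `ℤ[G]`. -/
def IsSEDF {G : Type} [CommGroup G] [Fintype G] [DecidableEq G]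
    (v m k lam : ℕ) (D : Fin m → Finset G) : Prop :=
  Fintype.card G = v ∧ 2 ≤ m ∧ (∀ i, (D i).card = k) ∧
  (∀ i j, i ≠ j → Disjoint (D i) (D j)) ∧
  ∀ j, (∑ d ∈ D j, MonoidAlgebra.of ℤ G d) *
      (∑ i ∈ Finset.univ.erase j, ∑ d ∈ D i, MonoidAlgebra.of ℤ G d⁻¹)
    = (lam : ℤ) • ((∑ g : G, MonoidAlgebra.of ℤ G g) - 1)


/-! If every nonprincipal character vanished on `D = ⋃ Dᵢ`, then by orthogonality of characters
the indicator of `D` would be constant, so `D = G` and `v = mk`. Applying the augmentation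
`ℤ[G] → ℤ` to the defining equation gives `k²(m - 1) = λ(v - 1) = λ(mk - 1)`. Since `k` is prime
to `mk - 1`, `k ∣ λ`, hence `λ(mk - 1) ≥ k(mk - 1) > k²(m - 1)` as soon as `k > 1`. -/

theorem Int.not_sq_mul_sub_one_eq_mul {k m lam : ℤ} (hk : 1 < k) (hm : 1 < m) :
    k ^ 2 * (m - 1) ≠ lam * (m * k - 1) := by
  intro h
  have hcop : IsCoprime k (m * k - 1) := ⟨m, -1, by ring⟩
  obtain ⟨t, rfl⟩ : k ∣ lam := hcop.dvd_of_dvd_mul_right ⟨k * (m - 1), by rw [← h]; ring⟩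
  have h' : k * (m - 1) = t * (m * k - 1) :=
    mul_left_cancel₀ (by positivity) (by linear_combination h)
  have hmk : 0 < m * k - 1 := by nlinarith
  have ht : 1 ≤ t := by
    by_contra! ht
    nlinarith
  nlinarith

theorem Finset.eq_univ_of_sum_monoidHom_eq_zero {G : Type*} [CommGroup G] [Fintype G]
    {S : Finset G} (hS : S.Nonempty) (h : ∀ χ : G →* ℂ, χ ≠ 1 → ∑ d ∈ S, χ d = 0) :
    S = univ := by
  by_contra hne
  obtain ⟨g, hg⟩ : ∃ g, g ∉ S := by simpa [eq_univ_iff_forall] using hne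
  have hvanish (ψ : AddChar (Additive G) ℂ) (hψ : ψ ≠ 0) :
      ∑ d ∈ S, ψ (Additive.ofMul d) = 0 := by
    refine h ψ.toMonoidHom fun h1 ↦ hψ ?_
    ext a
    exact DFunLike.congr_fun h1 a.toMul
  have hcount : ∑ ψ : AddChar (Additive G) ℂ, ∑ d ∈ S, ψ (Additive.ofMul (g⁻¹ * d)) = #S := by
    rw [sum_eq_single_of_mem 0 (mem_univ _) fun ψ _ hψ ↦ ?_]
    · simp
    simp_rw [ofMul_mul, ψ.map_add_eq_mul, ← mul_sum, hvanish ψ hψ, mul_zero]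
  have horth : ∑ ψ : AddChar (Additive G) ℂ, ∑ d ∈ S, ψ (Additive.ofMul (g⁻¹ * d)) = 0 := by
    rw [sum_comm]
    refine sum_eq_zero fun d hd ↦ AddChar.sum_apply_eq_zero_iff_ne_zero.2 ?_
    rintro h0
    exact hg (inv_mul_eq_one.1 (Additive.ofMul.injective h0) ▸ hd)
  exact hS.card_ne_zero (by exact_mod_cast hcount.symm.trans horth)

namespace IsSEDF

variable {G : Type} [CommGroup G] [Fintype G] [DecidableEq G] {v m k lam : ℕ}
  {D : Fin m → Finset G}

theorem card_biUnion (h : IsSEDF v m k lam D) : #(univ.biUnion D) = m * k := by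
  rw [Finset.card_biUnion fun i _ j _ hij ↦ h.2.2.2.1 i j hij]
  simp [h.2.2.1]

theorem sq_mul_sub_one_eq (h : IsSEDF v m k lam D) :
    (k : ℤ) ^ 2 * (m - 1) = lam * (v - 1) := by
  obtain ⟨hv, hm, hcard, -, hdiff⟩ := h
  have e := congrArg (MonoidAlgebra.lift ℤ ℤ G 1) (hdiff ⟨0, by omega⟩)
  simp only [zsmul_eq_mul, map_mul, map_sub, map_one, map_sum, map_intCast,
    MonoidAlgebra.lift_of, MonoidHom.one_apply, sum_const, nsmul_eq_mul, mul_one, card_univ,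
    hcard, hv, Fintype.card_fin, card_erase_of_mem (mem_univ _)] at e
  push_cast [Nat.cast_sub (show 1 ≤ m by omega)] at e
  linear_combination e

end IsSEDF

theorem sedf_exists_nonvanishing_character {G : Type} [CommGroup G] [Fintype G]
    [DecidableEq G] {v m k lam : ℕ} (D : Fin m → Finset G)
    (h : IsSEDF v m k lam D) (hk : 1 < k) :
    ∃ χ : G →* ℂ, χ ≠ 1 ∧ ∑ d ∈ Finset.univ.biUnion D, χ d ≠ 0 := by
  by_contra! hvanish
  have hm : 2 ≤ m := h.2.1
  have hcover : univ.biUnion D = univ := by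
    refine eq_univ_of_sum_monoidHom_eq_zero (card_pos.1 ?_) hvanish
    rw [h.card_biUnion]
    positivity
  have hv : v = m * k := by rw [← h.1, ← card_univ, ← hcover, h.card_biUnion]
  have hcount := h.sq_mul_sub_one_eq
  rw [hv] at hcount
  push_cast at hcount
  exact Int.not_sq_mul_sub_one_eq_mul (by exact_mod_cast hk) (by exact_mod_cast hm) hcount
end

section
/- Let {D₁,…,Dₘ} be a nontrivial (v,m,k,λ)-SEDF in an abelian group G, let D = ⋃ᵢ Dᵢ, and let χ be a nonprincipal character of G with χ(D) ≠ 0. Then for each j, χ(D_j) = α·χ(D) where α = |χ(D_j)|²/(|χ(D_j)|² − λ), and α satisfies the quadratic equation α² − α − λ/|χ(D)|² = 0. -/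
/- Applying the character χ to the defining identity of the SEDF, and using that χ sums to zero
over `G`, gives `χ(D_j) · conj (χ(D) - χ(D_j)) = -λ`, i.e. `χ(D_j) · conj χ(D) = |χ(D_j)|² - λ`
is real. Multiplying by `χ(D)` shows `χ(D_j) = β χ(D)` with `β = (|χ(D_j)|² - λ) / |χ(D)|²`
real; then `|χ(D_j)|² = β² |χ(D)|²` and `λ = (β² - β) |χ(D)|²`, from which `α = β` and the
quadratic equation follow. -/

open Finset

open ComplexConjugate

lemma MonoidHom.norm_apply_eq_one_of_finite {G : Type*} [Group G] [Finite G] (χ : G →* ℂ)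
    (g : G) : ‖χ g‖ = 1 :=
  Complex.norm_eq_one_of_pow_eq_one (by rw [← map_pow, pow_card_eq_one', map_one])
    Nat.card_pos.ne'

lemma MonoidHom.apply_inv_eq_conj_of_finite {G : Type*} [Group G] [Finite G] (χ : G →* ℂ)
    (g : G) : χ g⁻¹ = conj (χ g) := by
  rw [map_inv, Complex.inv_eq_conj (χ.norm_apply_eq_one_of_finite g)]

lemma Complex.eq_ofReal_mul_of_mul_conj_eq_ofReal {s S : ℂ} {c : ℝ} (hS : S ≠ 0)
    (h : s * conj S = c) : s = ((c / ‖S‖ ^ 2 : ℝ) : ℂ) * S := by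
  have hN : ((‖S‖ ^ 2 : ℝ) : ℂ) ≠ 0 := by exact_mod_cast pow_ne_zero 2 (norm_ne_zero_iff.mpr hS)
  calc s = s * conj S * S / ((‖S‖ ^ 2 : ℝ) : ℂ) := by
        rw [mul_assoc, Complex.conj_mul', ← Complex.ofReal_pow, mul_div_cancel_right₀ _ hN]
    _ = ((c / ‖S‖ ^ 2 : ℝ) : ℂ) * S := by rw [h]; push_cast; ring

/- In the degenerate case `|s|² = λ` the hypothesis forces `s = 0` and `λ = 0`, and the statement
holds only because `α = 0 / 0 = 0` in Lean. -/
lemma Complex.eq_ratio_mul_of_mul_conj_eq {s S : ℂ} {lam : ℝ} (hS : S ≠ 0)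
    (h : s * conj S = ((‖s‖ ^ 2 - lam : ℝ) : ℂ)) :
    let α : ℝ := ‖s‖ ^ 2 / (‖s‖ ^ 2 - lam)
    s = (α : ℂ) * S ∧ α ^ 2 - α - lam / ‖S‖ ^ 2 = 0 := by
  intro α
  set β : ℝ := (‖s‖ ^ 2 - lam) / ‖S‖ ^ 2
  have hN : ‖S‖ ^ 2 ≠ 0 := pow_ne_zero 2 (norm_ne_zero_iff.mpr hS)
  have hs : s = (β : ℂ) * S := Complex.eq_ofReal_mul_of_mul_conj_eq_ofReal hS h
  have hnorm : ‖s‖ ^ 2 = β ^ 2 * ‖S‖ ^ 2 := by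
    rw [hs, norm_mul, Complex.norm_real, Real.norm_eq_abs, mul_pow, sq_abs]
  have hlam : lam = (β ^ 2 - β) * ‖S‖ ^ 2 := by
    have hβN : β * ‖S‖ ^ 2 = ‖s‖ ^ 2 - lam := div_mul_cancel₀ _ hN
    linear_combination hβN + hnorm
  have hαβ : α = β := by
    rcases eq_or_ne β 0 with hβ0 | hβ0
    · simp [α, hnorm, hlam, hβ0]
    · simp only [α, hnorm, hlam]
      field_simp
      ring
  refine ⟨by rw [hαβ, hs], ?_⟩
  rw [hαβ, hlam, mul_div_cancel_right₀ _ hN]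
  ring

namespace IsSEDF

variable {G : Type} [CommGroup G] [Fintype G] [DecidableEq G] {v m k lam : ℕ}
  {D : Fin m → Finset G}

lemma sum_biUnion_eq (h : IsSEDF v m k lam D) (f : G → ℂ) :
    ∑ d ∈ univ.biUnion D, f d = ∑ i, ∑ d ∈ D i, f d :=
  sum_biUnion fun i _ i' _ hii' => h.2.2.2.1 i i' hii'

lemma char_mul_conj_sum_compl (h : IsSEDF v m k lam D) (χ : G →* ℂ) (hχ : χ ≠ 1) (j : Fin m) :
    (∑ d ∈ D j, χ d) * conj (∑ d ∈ univ.biUnion D, χ d - ∑ d ∈ D j, χ d) = -(lam : ℂ) := by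
  have hchar := congrArg (MonoidAlgebra.lift ℤ ℂ G χ) (h.2.2.2.2 j)
  simp only [map_mul, map_zsmul, map_sub, map_one, map_sum, MonoidAlgebra.lift_of,
    sum_hom_units_eq_zero χ hχ, χ.apply_inv_eq_conj_of_finite] at hchar
  rw [h.sum_biUnion_eq, ← sum_erase_add _ _ (mem_univ j), add_sub_cancel_right]
  simp only [map_sum, hchar]
  simp

lemma char_mul_conj_sum_biUnion (h : IsSEDF v m k lam D) (χ : G →* ℂ) (hχ : χ ≠ 1)
    (j : Fin m) :
    (∑ d ∈ D j, χ d) * conj (∑ d ∈ univ.biUnion D, χ d) =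
      ((‖∑ d ∈ D j, χ d‖ ^ 2 - lam : ℝ) : ℂ) := by
  have hchar := h.char_mul_conj_sum_compl χ hχ j
  rw [map_sub, mul_sub, Complex.mul_conj'] at hchar
  push_cast
  linear_combination hchar

end IsSEDF

theorem sedf_char_ratio_general {G : Type} [CommGroup G] [Fintype G]
    [DecidableEq G] {v m k lam : ℕ} (D : Fin m → Finset G)
    (h : IsSEDF v m k lam D) (χ : G →* ℂ) (hχ : χ ≠ 1)
    (hχD : ∑ d ∈ Finset.univ.biUnion D, χ d ≠ 0) (j : Fin m) :
    let α : ℝ := ‖∑ d ∈ D j, χ d‖ ^ 2 /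
      (‖∑ d ∈ D j, χ d‖ ^ 2 - lam)
    (∑ d ∈ D j, χ d) = (α : ℂ) * ∑ d ∈ Finset.univ.biUnion D, χ d ∧
      α ^ 2 - α - (lam : ℝ) / ‖∑ d ∈ Finset.univ.biUnion D, χ d‖ ^ 2 = 0 :=
  Complex.eq_ratio_mul_of_mul_conj_eq hχD (h.char_mul_conj_sum_biUnion χ hχ j)

theorem sedf_char_ratio {G : Type} [CommGroup G] [Fintype G]
    [DecidableEq G] {v m k lam : ℕ} (D : Fin m → Finset G)
    (h : IsSEDF v m k lam D) (hk : 1 < k) (χ : G →* ℂ) (hχ : χ ≠ 1)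
    (hχD : ∑ d ∈ Finset.univ.biUnion D, χ d ≠ 0) (j : Fin m) :
    let α : ℝ := ‖∑ d ∈ D j, χ d‖ ^ 2 /
      (‖∑ d ∈ D j, χ d‖ ^ 2 - lam)
    (∑ d ∈ D j, χ d) = (α : ℂ) * ∑ d ∈ Finset.univ.biUnion D, χ d ∧
      α ^ 2 - α - (lam : ℝ) / ‖∑ d ∈ Finset.univ.biUnion D, χ d‖ ^ 2 = 0 :=
  sedf_char_ratio_general D h χ hχ hχD j
end

section
/- Suppose {D₁,…,Dₘ} is a nontrivial (v,m,k,λ)-SEDF in an abelian group G with 1 ∉ ⋃ᵢ Dᵢ. Then for each j, neither D_j ∪ {1} nor G \ D_j is a subgroup of G. -/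
/-!
Reading off coefficients, the SEDF identity says that every `x ≠ 1` is an external difference
`a * d⁻¹` (`a ∈ D j`, `d ∈ D i`, `i ≠ j`) in exactly `λ` ways. Disjointness makes some external
difference nontrivial, so `λ > 0` and every `x ≠ 1` is one. If `D j ∪ {1}` were a subgroup,
writing some `a₀ ∈ D j` as `a * d⁻¹` would put `d = a₀⁻¹ * a` in `D j ∪ {1}`, which disjointness
and `1 ∉ D i` forbid. If `G \ D j` were a subgroup, writing some `d₀ ≠ 1` of another block as
`a * d⁻¹` would put `a = d₀ * d` in `G \ D j`.
-/

open Finset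

namespace MonoidAlgebra

variable {R G : Type*} [Semiring R] [Group G] [DecidableEq G]

theorem coeff_sum_of_mul_sum_of_inv (A B : Finset G) (x : G) :
    ((∑ a ∈ A, of R G a) * ∑ b ∈ B, of R G b⁻¹).coeff x =
      #{p ∈ A ×ˢ B | p.1 * p.2⁻¹ = x} := by
  rw [Finset.sum_mul_sum, ← Finset.sum_product']
  simp only [of_apply, single_mul_single, mul_one, coeff_sum, Finsupp.finsetSum_apply,
    coeff_single, Finsupp.single_apply]
  rw [Finset.sum_boole]

end MonoidAlgebra

namespace IsSEDF

variable {G : Type} [CommGroup G] [Fintype G] [DecidableEq G] {v m k lam : ℕ}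
  {D : Fin m → Finset G}

theorem two_le (h : IsSEDF v m k lam D) : 2 ≤ m := h.2.1

theorem card_eq (h : IsSEDF v m k lam D) (i : Fin m) : #(D i) = k := h.2.2.1 i

theorem disjoint (h : IsSEDF v m k lam D) {i j : Fin m} (hij : i ≠ j) : Disjoint (D i) (D j) :=
  h.2.2.2.1 i j hij

theorem card_mul_inv_eq (h : IsSEDF v m k lam D) (j : Fin m) {x : G} (hx : x ≠ 1) :
    #{p ∈ D j ×ˢ (univ.erase j).biUnion D | p.1 * p.2⁻¹ = x} = lam := by
  obtain ⟨-, -, -, hdisj, hdiff⟩ := h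
  have hunion : ∑ i ∈ univ.erase j, ∑ d ∈ D i, MonoidAlgebra.of ℤ G d⁻¹ =
      ∑ d ∈ (univ.erase j).biUnion D, MonoidAlgebra.of ℤ G d⁻¹ :=
    (sum_biUnion fun i _ i' _ hii' => hdisj i i' hii').symm
  have hcoeff := congrArg (MonoidAlgebra.coeff · x) (hdiff j)
  rw [hunion, MonoidAlgebra.coeff_sum_of_mul_sum_of_inv] at hcoeff
  simp only [MonoidAlgebra.coeff_smul_apply, MonoidAlgebra.coeff_sub, MonoidAlgebra.coeff_sum,
    MonoidAlgebra.of_apply, MonoidAlgebra.one_def, MonoidAlgebra.coeff_single, Finsupp.sub_apply,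
    Finsupp.finsetSum_apply, Finsupp.single_apply, hx.symm] at hcoeff
  simpa using hcoeff

theorem exists_ne_nonempty (h : IsSEDF v m k lam D) (hk : 0 < k) (j : Fin m) :
    ∃ i ≠ j, (D i).Nonempty := by
  obtain ⟨i, hij⟩ :=
    Fintype.exists_ne_of_one_lt_card (by rw [Fintype.card_fin]; exact h.two_le) j
  exact ⟨i, hij, card_pos.1 (h.card_eq i ▸ hk)⟩

theorem lam_pos (h : IsSEDF v m k lam D) (hk : 0 < k) : 0 < lam := by
  have hm : 0 < m := by have := h.two_le; omega
  obtain ⟨j, -⟩ := h.exists_ne_nonempty hk ⟨0, hm⟩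
  obtain ⟨i, hij, d, hd⟩ := h.exists_ne_nonempty hk j
  obtain ⟨a, ha⟩ := card_pos.1 (h.card_eq j ▸ hk)
  have had : a * d⁻¹ ≠ 1 := by
    rw [Ne, mul_inv_eq_one]
    rintro rfl
    exact disjoint_left.1 (h.disjoint hij) hd ha
  rw [← h.card_mul_inv_eq j had, card_pos]
  exact ⟨(a, d), by simpa [ha] using ⟨i, hij, hd⟩⟩

theorem exists_mul_inv_eq (h : IsSEDF v m k lam D) (hk : 0 < k) (j : Fin m) {x : G}
    (hx : x ≠ 1) : ∃ a ∈ D j, ∃ i ≠ j, ∃ d ∈ D i, a * d⁻¹ = x := by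
  obtain ⟨⟨a, d⟩, hp⟩ := card_pos.1 ((h.card_mul_inv_eq j hx).symm ▸ h.lam_pos hk)
  simp only [mem_filter, mem_product, mem_biUnion, mem_erase] at hp
  obtain ⟨⟨ha, i, ⟨hij, -⟩, hd⟩, rfl⟩ := hp
  exact ⟨a, ha, i, hij, d, hd, rfl⟩

theorem coe_subgroup_ne_insert_one (h : IsSEDF v m k lam D) (hk : 0 < k)
    (h1 : ∀ i, (1 : G) ∉ D i) (j : Fin m) (H : Subgroup G) :
    (H : Set G) ≠ insert 1 ↑(D j) := by
  intro hH
  have hmem : ∀ x, x ∈ H ↔ x = 1 ∨ x ∈ D j := by simpa [Set.ext_iff] using hH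
  obtain ⟨a₀, ha₀⟩ := card_pos.1 (h.card_eq j ▸ hk)
  have ha₀1 : a₀ ≠ 1 := fun ha₀1 => h1 j (ha₀1 ▸ ha₀)
  obtain ⟨a, ha, i, hij, d, hd, rfl⟩ := h.exists_mul_inv_eq hk j ha₀1
  have hdH : d ∈ H := by
    simpa using H.mul_mem (H.inv_mem ((hmem _).2 (.inr ha₀))) ((hmem a).2 (.inr ha))
  rcases (hmem d).1 hdH with rfl | hdj
  · exact h1 i hd
  · exact disjoint_left.1 (h.disjoint hij) hd hdj

theorem coe_subgroup_ne_compl (h : IsSEDF v m k lam D) (hk : 1 < k) (j : Fin m)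
    (H : Subgroup G) : (H : Set G) ≠ (↑(D j))ᶜ := by
  intro hH
  have hmem : ∀ x, x ∈ H ↔ x ∉ D j := by simpa [Set.ext_iff] using hH
  have hcompl : ∀ i ≠ j, ∀ x ∈ D i, x ∈ H := fun i hij x hx =>
    (hmem x).2 (disjoint_left.1 (h.disjoint hij) hx)
  obtain ⟨i₀, hi₀j, -⟩ := h.exists_ne_nonempty (by omega) j
  obtain ⟨d₀, hd₀, hd₀1⟩ := Finset.exists_mem_ne (h.card_eq i₀ ▸ hk) 1
  obtain ⟨a, ha, i, hij, d, hd, rfl⟩ := h.exists_mul_inv_eq (by omega) j hd₀1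
  have haH : a ∈ H := by
    simpa using H.mul_mem (hcompl i₀ hi₀j _ hd₀) (hcompl i hij d hd)
  exact (hmem a).1 haH ha

end IsSEDF

theorem sedf_not_subgroup {G : Type} [CommGroup G] [Fintype G]
    [DecidableEq G] {v m k lam : ℕ} (D : Fin m → Finset G)
    (h : IsSEDF v m k lam D) (hk : 1 < k)
    (h1 : (1 : G) ∉ Finset.univ.biUnion D) (j : Fin m) :
    (∀ H : Subgroup G, (H : Set G) ≠ insert (1 : G) ↑(D j)) ∧
    (∀ H : Subgroup G, (H : Set G) ≠ (↑(D j) : Set G)ᶜ) := by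
  have h1' : ∀ i, (1 : G) ∉ D i := fun i hi => h1 (mem_biUnion.2 ⟨i, mem_univ i, hi⟩)
  exact ⟨h.coe_subgroup_ne_insert_one (by omega) h1' j, h.coe_subgroup_ne_compl hk j⟩
end

section
/- Let D₁,…,Dₘ partition the nonidentity elements of an abelian group G of order v = km+1 into m subsets each of size k > 1. Then {D₁,…,Dₘ} is a (v,m,k,λ)-SEDF in G if and only if each D_j is a (v, k, k−λ−1, k−λ) partial difference set in G. -/
open Finset

/-!
Write `S = ∑_{g ∈ G} g` and `D_j^{(-1)}` for the inverted block. Since the blocks partition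
`G ∖ {1}` and inversion permutes `G`, `∑_{i ≠ j} D_i^{(-1)} = S - 1 - D_j^{(-1)}`; since each
`D_j` has `k` elements and `S` is translation invariant, `D_j S = k S`. With these two facts
the SEDF identity for `D_j` and the PDS identity for `D_j` are linear rearrangements of each other.
-/

namespace MonoidAlgebra

section Group

variable {R G : Type*} [Semiring R] [Group G] [Fintype G]

theorem of_mul_sum_univ (g : G) : of R G g * ∑ x : G, of R G x = ∑ x : G, of R G x := by
  rw [mul_sum]
  exact Fintype.sum_equiv (Equiv.mulLeft g) _ _ fun x => (map_mul (of R G) g x).symm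

theorem sum_mul_sum_univ (A : Finset G) :
    (∑ d ∈ A, of R G d) * ∑ x : G, of R G x = #A • ∑ x : G, of R G x := by
  rw [sum_mul, sum_congr rfl fun g _ => of_mul_sum_univ g, sum_const]

theorem sum_univ_of_inv : ∑ g : G, of R G g⁻¹ = ∑ g : G, of R G g :=
  Fintype.sum_equiv (Equiv.inv G) _ _ fun _ => rfl

end Group

theorem sum_sum_of_inv_eq_sum_univ_sub_one {R G ι : Type*} [Ring R] [Group G] [Fintype G]
    [DecidableEq G] [Fintype ι] {D : ι → Finset G}
    (hdisj : ∀ i j, i ≠ j → Disjoint (D i) (D j))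
    (hpart : univ.biUnion D = univ.erase (1 : G)) :
    ∑ i, ∑ d ∈ D i, of R G d⁻¹ = ∑ g : G, of R G g - 1 := by
  rw [← sum_biUnion fun i _ j _ hij => hdisj i j hij, hpart,
    sum_erase_eq_sub (mem_univ 1), sum_univ_of_inv, inv_one, map_one]

end MonoidAlgebra

theorem mul_sub_one_sub_eq_smul_iff {R : Type*} [CommRing R] {A A' S : R} {k lam : ℤ}
    (hAS : A * S = k • S) :
    A * (S - 1 - A') = lam • (S - 1) ↔
      A * A' = (k - (k - lam)) • 1 + (k - lam - 1) • A + (k - lam) • (S - A) := by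
  simp only [zsmul_eq_mul] at hAS ⊢
  push_cast
  constructor <;> intro h <;> linear_combination hAS - h

theorem near_complete_sedf_iff_pds_general {G : Type} [CommGroup G] [Fintype G]
    [DecidableEq G] {v m k lam : ℕ} (D : Fin m → Finset G)
    (hcard : Fintype.card G = v) (hm : 2 ≤ m)
    (hsize : ∀ i, (D i).card = k)
    (hdisj : ∀ i j, i ≠ j → Disjoint (D i) (D j))
    (hpart : Finset.univ.biUnion D = Finset.univ.erase (1 : G)) :
    IsSEDF v m k lam D ↔
      ∀ j, (∑ d ∈ D j, MonoidAlgebra.of ℤ G d) *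
          (∑ d ∈ D j, MonoidAlgebra.of ℤ G d⁻¹)
        = ((k : ℤ) - ((k : ℤ) - (lam : ℤ))) • (1 : MonoidAlgebra ℤ G)
          + ((k : ℤ) - (lam : ℤ) - 1) • (∑ d ∈ D j, MonoidAlgebra.of ℤ G d)
          + ((k : ℤ) - (lam : ℤ)) •
              ((∑ g : G, MonoidAlgebra.of ℤ G g) - ∑ d ∈ D j, MonoidAlgebra.of ℤ G d) := by
  have hblock : ∀ j, (∑ d ∈ D j, MonoidAlgebra.of ℤ G d) * ∑ g : G, MonoidAlgebra.of ℤ G g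
      = (k : ℤ) • ∑ g : G, MonoidAlgebra.of ℤ G g := fun j => by
    rw [MonoidAlgebra.sum_mul_sum_univ, hsize j, natCast_zsmul]
  have hothers : ∀ j, ∑ i ∈ univ.erase j, ∑ d ∈ D i, MonoidAlgebra.of ℤ G d⁻¹
      = ∑ g : G, MonoidAlgebra.of ℤ G g - 1 - ∑ d ∈ D j, MonoidAlgebra.of ℤ G d⁻¹ := fun j => by
    rw [sum_erase_eq_sub (mem_univ j),
      MonoidAlgebra.sum_sum_of_inv_eq_sum_univ_sub_one hdisj hpart]
  constructor
  · rintro ⟨-, -, -, -, hsedf⟩ j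
    exact (mul_sub_one_sub_eq_smul_iff (hblock j)).1 (hothers j ▸ hsedf j)
  · refine fun hpds => ⟨hcard, hm, hsize, hdisj, fun j => ?_⟩
    rw [hothers j]
    exact (mul_sub_one_sub_eq_smul_iff (hblock j)).2 (hpds j)

theorem near_complete_sedf_iff_pds {G : Type} [CommGroup G] [Fintype G]
    [DecidableEq G] {v m k lam : ℕ} (D : Fin m → Finset G)
    (hv : v = k * m + 1) (hcard : Fintype.card G = v) (hk : 1 < k) (hm : 2 ≤ m)
    (hsize : ∀ i, (D i).card = k)
    (hdisj : ∀ i j, i ≠ j → Disjoint (D i) (D j))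
    (hpart : Finset.univ.biUnion D = Finset.univ.erase (1 : G)) :
    IsSEDF v m k lam D ↔
      ∀ j, (∑ d ∈ D j, MonoidAlgebra.of ℤ G d) *
          (∑ d ∈ D j, MonoidAlgebra.of ℤ G d⁻¹)
        = ((k : ℤ) - ((k : ℤ) - (lam : ℤ))) • (1 : MonoidAlgebra ℤ G)
          + ((k : ℤ) - (lam : ℤ) - 1) • (∑ d ∈ D j, MonoidAlgebra.of ℤ G d)
          + ((k : ℤ) - (lam : ℤ)) •
              ((∑ g : G, MonoidAlgebra.of ℤ G g) - ∑ d ∈ D j, MonoidAlgebra.of ℤ G d) :=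
  near_complete_sedf_iff_pds_general D hcard hm hsize hdisj hpart
end

section
/- Let p and q be primes with q a primitive root modulo p^e, and let u be an integer with q^f exactly dividing u (f ≥ 1). Suppose X, X′ ∈ ℤ[ζ_{p^e}] satisfy X·conj(X′) = u. Then either X ≡ 0 (mod q^{⌈f/2⌉}) or X′ ≡ 0 (mod q^{⌈f/2⌉}). Moreover, if X = X′, then f is even. -/
open Finset

open Polynomial in
private lemma cyc_irr' (n q : ℕ) (hq : q.Prime) (hn : n ≠ 0) (qu : (ZMod n)ˣ)
    (hqu : (qu : ZMod n) = (q : ZMod n)) (hgen : ∀ x : (ZMod n)ˣ, x ∈ Subgroup.zpowers qu) :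
    Irreducible (cyclotomic n (ZMod q)) := by
  haveI : Fact q.Prime := ⟨hq⟩
  haveI : NeZero n := ⟨hn⟩
  have horder : orderOf qu = Nat.totient n := by
    rw [orderOf_eq_card_of_forall_mem_zpowers hgen, Nat.card_eq_fintype_card,
      ZMod.card_units_eq_totient]
  have hcop : Nat.Coprime q n := by
    rw [← ZMod.isUnit_iff_coprime]
    exact hqu ▸ qu.isUnit
  have hqn : ¬ q ∣ n := (Nat.Prime.coprime_iff_not_dvd hq).mp hcop
  have htotpos : 0 < Nat.totient n := Nat.totient_pos.mpr (Nat.pos_of_ne_zero hn)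
  have hCne : cyclotomic n (ZMod q) ≠ 0 := cyclotomic_ne_zero n _
  have hCdeg : (cyclotomic n (ZMod q)).natDegree = Nat.totient n := natDegree_cyclotomic n _
  have hCnu : ¬ IsUnit (cyclotomic n (ZMod q)) := by
    intro h
    have := natDegree_eq_zero_of_isUnit h
    omega
  obtain ⟨g, hgirr, hgdvd⟩ := WfDvdMonoid.exists_irreducible_factor hCnu hCne
  -- degree of g
  set d := g.natDegree with hd
  have hg0 : g ≠ 0 := hgirr.ne_zero
  have hdpos : 0 < d := hgirr.natDegree_pos
  haveI : Fact (Irreducible g) := ⟨hgirr⟩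
  set F := AdjoinRoot g
  let pb := AdjoinRoot.powerBasis hg0
  haveI : Module.Finite (ZMod q) F := pb.finite
  haveI : Fintype F := Module.fintypeOfFintype pb.basis
  have hcard : Fintype.card F = q ^ d := by
    rw [Module.card_eq_pow_finrank (K := ZMod q) (V := F), ZMod.card, pb.finrank,
      AdjoinRoot.powerBasis_dim]
  haveI : NeZero (n : F) := by
    constructor
    have h1 : ((n : ZMod q) : F) = (n : F) := map_natCast (algebraMap (ZMod q) F) n
    rw [← h1]
    intro h2
    have h3 : (n : ZMod q) = 0 := by
      have := (algebraMap (ZMod q) F).injective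
      exact this (by simpa using h2)
    exact hqn ((ZMod.natCast_eq_zero_iff n q).mp h3)
  set α := AdjoinRoot.root g with hα
  have hroot : IsRoot (cyclotomic n F) α := by
    obtain ⟨c, hc⟩ := hgdvd
    have h1 : IsRoot (g.map (AdjoinRoot.of g)) α := AdjoinRoot.isRoot_root g
    have h2 : (cyclotomic n (ZMod q)).map (AdjoinRoot.of g) = cyclotomic n F :=
      map_cyclotomic n _
    rw [← h2, hc, Polynomial.map_mul]
    simp only [IsRoot, eval_mul, h1]
    simp [Polynomial.IsRoot] at h1
    simp [h1]
  have hprimroot : IsPrimitiveRoot α n := (isRoot_cyclotomic_iff).mp hroot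
  have hα0 : α ≠ 0 := hprimroot.ne_zero hn
  have hfrob : α ^ (q ^ d) = α := by
    have := FiniteField.pow_card α
    rwa [hcard] at this
  have hpow : α ^ (q ^ d - 1) = 1 := by
    have hq1 : 1 ≤ q ^ d := Nat.one_le_pow _ _ hq.pos
    have : α ^ (q ^ d - 1) * α = 1 * α := by
      rw [one_mul, ← pow_succ, Nat.sub_add_cancel hq1, hfrob]
    exact mul_right_cancel₀ hα0 this
  have hdvd : n ∣ q ^ d - 1 := hprimroot.dvd_of_pow_eq_one _ hpow
  have hqd : (q : ZMod n) ^ d = 1 := by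
    have h1 : ((q ^ d - 1 : ℕ) : ZMod n) = 0 := (ZMod.natCast_eq_zero_iff _ n).mpr hdvd
    have hq1 : 1 ≤ q ^ d := Nat.one_le_pow _ _ hq.pos
    rw [Nat.cast_sub hq1] at h1
    push_cast at h1
    linear_combination h1
  have hqud : qu ^ d = 1 := by
    ext
    push_cast [hqu]
    exact hqd
  have hord : Nat.totient n ∣ d := horder ▸ orderOf_dvd_of_pow_eq_one hqud
  have hle1 : Nat.totient n ≤ d := Nat.le_of_dvd hdpos hord
  have hle2 : d ≤ Nat.totient n := by
    have := Polynomial.natDegree_le_of_dvd hgdvd hCne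
    omega
  have hdeq : d = Nat.totient n := le_antisymm hle2 hle1
  -- conclude associated
  obtain ⟨c, hc⟩ := hgdvd
  have hc0 : c ≠ 0 := by rintro rfl; simp at hc; exact hCne hc
  have hcdeg : c.natDegree = 0 := by
    have := Polynomial.natDegree_mul hg0 hc0
    rw [← hc, hCdeg] at this
    omega
  have hcunit : IsUnit c := by
    rw [Polynomial.isUnit_iff_degree_eq_zero]
    rw [Polynomial.degree_eq_natDegree hc0, hcdeg]
    rfl
  have : Associated g (cyclotomic n (ZMod q)) := ⟨hcunit.unit, by
    rw [IsUnit.unit_spec, ← hc]⟩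
  exact this.irreducible hgirr

open Polynomial in
set_option maxHeartbeats 1000000 in
set_option synthInstance.maxHeartbeats 400000 in
private lemma prime_in_adjoin' {n q : ℕ} (hq : q.Prime) (hn : 0 < n) {ζ : ℂ}
    (hζ : IsPrimitiveRoot ζ n) (hirr : Irreducible (cyclotomic n (ZMod q))) :
    Prime (q : Algebra.adjoin ℤ ({ζ} : Set ℂ)) := by
  haveI : Fact q.Prime := ⟨hq⟩
  have hint : IsIntegral ℤ ζ := hζ.isIntegral hn
  have hmin : minpoly ℤ ζ = cyclotomic n ℤ := (cyclotomic_eq_minpoly hζ hn).symm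
  set Φ : ℤ[X] := minpoly ℤ ζ with hΦ
  letI e1 : AdjoinRoot Φ ≃ₐ[ℤ] Algebra.adjoin ℤ ({ζ} : Set ℂ) := minpoly.equivAdjoin hint
  have hq0R : (q : Algebra.adjoin ℤ ({ζ} : Set ℂ)) ≠ 0 := by
    intro h
    have h2 : ((q : Algebra.adjoin ℤ ({ζ} : Set ℂ)) : ℂ) = 0 := by rw [h]; rfl
    rw [show ((q : Algebra.adjoin ℤ ({ζ} : Set ℂ)) : ℂ) = (q : ℂ) from
      map_natCast (Subalgebra.val (Algebra.adjoin ℤ ({ζ} : Set ℂ))) q] at h2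
    exact_mod_cast hq.ne_zero (by exact_mod_cast h2)
  have key : Prime (q : AdjoinRoot Φ) := by
    have hq0 : (q : AdjoinRoot Φ) ≠ 0 := by
      intro h
      apply hq0R
      have := congrArg e1 h
      rwa [map_natCast, map_zero] at this
    rw [← Ideal.span_singleton_prime hq0, ← Ideal.Quotient.isDomain_iff_prime]
    set I : Ideal ℤ := Ideal.span {(q : ℤ)} with hI
    have hspan : Ideal.span {(q : AdjoinRoot Φ)} = I.map (AdjoinRoot.of Φ) := by
      rw [hI, Ideal.map_span, Set.image_singleton, map_natCast]
    rw [hspan]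
    letI E2 := AdjoinRoot.quotAdjoinRootEquivQuotPolynomialQuot I Φ
    letI e0 : (ℤ ⧸ I) ≃+* ZMod q :=
      (Int.quotientSpanEquivZMod (q : ℤ)).trans (ZMod.ringEquivCongr (by simp))
    have helt : (Polynomial.mapEquiv e0) (Φ.map (Ideal.Quotient.mk I)) =
        cyclotomic n (ZMod q) := by
      rw [Polynomial.mapEquiv_apply, Polynomial.map_map]
      rw [Subsingleton.elim ((e0 : (ℤ ⧸ I) →+* ZMod q).comp (Ideal.Quotient.mk I))
        (Int.castRingHom (ZMod q))]
      rw [hmin, map_cyclotomic]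
    letI E3 : ((ℤ ⧸ I)[X] ⧸ Ideal.span {Φ.map (Ideal.Quotient.mk I)}) ≃+*
        ((ZMod q)[X] ⧸ Ideal.span {cyclotomic n (ZMod q)}) :=
      Ideal.quotientEquiv _ _ (Polynomial.mapEquiv e0) (by
        rw [Ideal.map_span, Set.image_singleton]
        exact congrArg (fun t => Ideal.span {t}) helt.symm)
    haveI hpr : (Ideal.span {cyclotomic n (ZMod q)}).IsPrime :=
      (Ideal.span_singleton_prime (cyclotomic_ne_zero n _)).mpr
        (irreducible_iff_prime.mp hirr)
    haveI : IsDomain ((ZMod q)[X] ⧸ Ideal.span {cyclotomic n (ZMod q)}) :=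
      Ideal.Quotient.isDomain_iff_prime _ |>.mpr hpr
    letI F := E2.trans E3
    exact Function.Injective.isDomain F.toRingHom F.injective
  have := (MulEquiv.prime_iff e1.toRingEquiv.toMulEquiv (p := (q : AdjoinRoot Φ))).mpr key
  rwa [show e1.toRingEquiv.toMulEquiv (q : AdjoinRoot Φ) =
    (q : Algebra.adjoin ℤ ({ζ} : Set ℂ)) from map_natCast e1 q] at this

private lemma conjmem' {n : ℕ} (hn : n ≠ 0) {ζ : ℂ} (hζ : IsPrimitiveRoot ζ n)
    (hconjζ : (starRingEnd ℂ) ζ = ζ⁻¹) :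
    ∀ x : Algebra.adjoin ℤ ({ζ} : Set ℂ),
      (starRingEnd ℂ) (x : ℂ) ∈ Algebra.adjoin ℤ ({ζ} : Set ℂ) := by
  have hpow1 : ζ * ζ ^ (n - 1) = 1 := by
    rw [← pow_succ', Nat.sub_add_cancel (Nat.one_le_iff_ne_zero.mpr hn), hζ.pow_eq_one]
  have hζpow : (starRingEnd ℂ) ζ = ζ ^ (n - 1) := by
    rw [hconjζ, inv_eq_of_mul_eq_one_right hpow1]
  intro x
  have hsub : (Algebra.adjoin ℤ ({ζ} : Set ℂ)).map ((starRingEnd ℂ).toIntAlgHom) ≤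
      Algebra.adjoin ℤ ({ζ} : Set ℂ) := by
    rw [AlgHom.map_adjoin, Set.image_singleton]
    apply Algebra.adjoin_le
    rw [Set.singleton_subset_iff]
    show (starRingEnd ℂ) ζ ∈ Algebra.adjoin ℤ ({ζ} : Set ℂ)
    rw [hζpow]
    exact pow_mem (Algebra.self_mem_adjoin_singleton ℤ ζ) _
  exact hsub ⟨(x : ℂ), x.2, rfl⟩

private lemma main_aux' (q f : ℕ) (hq : q.Prime) (hf : 0 < f) (u : ℤ)
    (hu : (q : ℤ) ^ f ∣ u ∧ ¬ (q : ℤ) ^ (f + 1) ∣ u)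
    (S : Subalgebra ℤ ℂ) (hqprime : Prime (q : S))
    (hconjmem : ∀ x : S, (starRingEnd ℂ) (x : ℂ) ∈ S)
    (X X' : S) (hXX' : (X : ℂ) * (starRingEnd ℂ) (X' : ℂ) = (u : ℂ)) :
    ((q : S) ^ ((f + 1) / 2) ∣ X ∨ (q : S) ^ ((f + 1) / 2) ∣ X') ∧ (X = X' → Even f) := by
  let σ : S →ₐ[ℤ] S :=
    AlgHom.codRestrict (((starRingEnd ℂ).toIntAlgHom).comp (Subalgebra.val S)) S hconjmem
  have hσ_coe : ∀ x : S, ((σ x : S) : ℂ) = (starRingEnd ℂ) (x : ℂ) := fun x => rfl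
  have hσσ : ∀ x : S, σ (σ x) = x := by
    intro x
    apply Subtype.ext
    rw [hσ_coe, hσ_coe, Complex.conj_conj]
  have hdvd_iff : ∀ (k : ℕ) (x : S), (q : S) ^ k ∣ σ x ↔ (q : S) ^ k ∣ x := by
    intro k x
    constructor
    · intro h
      have := map_dvd σ h
      rwa [map_pow, map_natCast, hσσ] at this
    · intro h
      have := map_dvd σ h
      rwa [map_pow, map_natCast] at this
  have hXY : X * σ X' = ((u : ℤ) : S) := by
    apply Subtype.ext
    show (X : ℂ) * ((σ X' : S) : ℂ) = (((u : ℤ) : S) : ℂ)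
    rw [hσ_coe, hXX']
    exact (map_intCast (Subalgebra.val S) u).symm
  obtain ⟨w, hw⟩ := hu.1
  have hqw : ¬ (q : ℤ) ∣ w := fun ⟨t, ht⟩ => hu.2 ⟨t, by rw [hw, ht]; ring⟩
  have hcop : IsCoprime (q : ℤ) w :=
    ((Nat.prime_iff_prime_int.mp hq).coprime_iff_not_dvd).mpr hqw
  have hcopR : IsCoprime ((q : ℕ) : S) ((w : ℤ) : S) := by
    have h := hcop.map (algebraMap ℤ S)
    have h1 : (algebraMap ℤ S) (q : ℤ) = ((q : ℕ) : S) := by push_cast; rfl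
    have h2 : (algebraMap ℤ S) w = ((w : ℤ) : S) := map_intCast _ w
    rwa [h1, h2] at h
  have hqnw : ¬ (q : S) ∣ ((w : ℤ) : S) := fun h =>
    hqprime.not_unit (hcopR.isUnit_of_dvd' dvd_rfl h)
  have huR : ((u : ℤ) : S) = (q : S) ^ f * ((w : ℤ) : S) := by
    rw [hw]; push_cast; ring
  have hnotdvd : ¬ (q : S) ^ (f + 1) ∣ ((u : ℤ) : S) := by
    rintro ⟨t, ht⟩
    apply hqnw
    have hfne : (q : S) ^ f ≠ 0 := pow_ne_zero _ hqprime.ne_zero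
    rw [huR, pow_succ] at ht
    exact ⟨t, mul_left_cancel₀ hfne (by rw [ht]; ring)⟩
  have hfinu : FiniteMultiplicity (q : S) ((u : ℤ) : S) := ⟨f, hnotdvd⟩
  have hfinXY : FiniteMultiplicity (q : S) (X * σ X') := by rw [hXY]; exact hfinu
  have hfinX : FiniteMultiplicity (q : S) X := hfinXY.mul_left
  have hfinY : FiniteMultiplicity (q : S) (σ X') := hfinXY.mul_right
  have hvalu : multiplicity (q : S) ((u : ℤ) : S) = f :=
    hfinu.multiplicity_eq_iff.mpr ⟨⟨((w : ℤ) : S), huR⟩, hnotdvd⟩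
  have hsum : multiplicity (q : S) X + multiplicity (q : S) (σ X') = f := by
    rw [← multiplicity_mul hqprime hfinXY, hXY, hvalu]
  constructor
  · have h1 : (f + 1) / 2 ≤ multiplicity (q : S) X ∨
        (f + 1) / 2 ≤ multiplicity (q : S) (σ X') := by omega
    rcases h1 with h | h
    · left
      exact dvd_trans (pow_dvd_pow _ h) (pow_multiplicity_dvd _ _)
    · right
      have h2 : (q : S) ^ ((f + 1) / 2) ∣ σ X' :=
        dvd_trans (pow_dvd_pow _ h) (pow_multiplicity_dvd _ _)
      exact (hdvd_iff _ X').mp h2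
  · intro hXX
    subst hXX
    have hmeq : multiplicity (q : S) (σ X) = multiplicity (q : S) X := by
      refine hfinY.multiplicity_eq_iff.mpr ⟨?_, ?_⟩
      · exact (hdvd_iff _ X).mpr (pow_multiplicity_dvd _ _)
      · intro hcon
        exact (hfinX.multiplicity_lt_iff_not_dvd.mp (lt_add_one _))
          ((hdvd_iff _ X).mp hcon)
    exact ⟨multiplicity (q : S) X, by omega⟩

theorem cyclotomic_divisibility (p q e f : ℕ) (hp : p.Prime) (hq : q.Prime)
    (hf : 0 < f) (u : ℤ) (hu : (q : ℤ) ^ f ∣ u ∧ ¬ (q : ℤ) ^ (f + 1) ∣ u)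
    (hprim : ∃ qu : (ZMod (p ^ e))ˣ, (qu : ZMod (p ^ e)) = (q : ZMod (p ^ e)) ∧
      ∀ x : (ZMod (p ^ e))ˣ, x ∈ Subgroup.zpowers qu)
    (X X' : Algebra.adjoin ℤ
      ({Complex.exp (2 * Real.pi * Complex.I / (p : ℂ) ^ e)} : Set ℂ))
    (hXX' : (X : ℂ) * (starRingEnd ℂ) (X' : ℂ) = (u : ℂ)) :
    ((q : Algebra.adjoin ℤ
        ({Complex.exp (2 * Real.pi * Complex.I / (p : ℂ) ^ e)} : Set ℂ)) ^ ((f + 1) / 2) ∣ X ∨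
     (q : Algebra.adjoin ℤ
        ({Complex.exp (2 * Real.pi * Complex.I / (p : ℂ) ^ e)} : Set ℂ)) ^ ((f + 1) / 2) ∣ X') ∧
    (X = X' → Even f) := by
  obtain ⟨qu, hqu, hgen⟩ := hprim
  have hn : p ^ e ≠ 0 := pow_ne_zero e hp.pos.ne'
  have hζ : IsPrimitiveRoot (Complex.exp (2 * Real.pi * Complex.I / (p : ℂ) ^ e)) (p ^ e) := by
    have h := Complex.isPrimitiveRoot_exp (p ^ e) hn
    rwa [show ((p ^ e : ℕ) : ℂ) = (p : ℂ) ^ e by push_cast; ring] at h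
  have hirr := cyc_irr' (p ^ e) q hq hn qu hqu hgen
  have hqprime := prime_in_adjoin' hq (Nat.pos_of_ne_zero hn) hζ hirr
  have hconjζ : (starRingEnd ℂ) (Complex.exp (2 * Real.pi * Complex.I / (p : ℂ) ^ e)) =
      (Complex.exp (2 * Real.pi * Complex.I / (p : ℂ) ^ e))⁻¹ := by
    rw [← Complex.exp_conj]
    rw [show (starRingEnd ℂ) (2 * Real.pi * Complex.I / (p : ℂ) ^ e) =
      -(2 * Real.pi * Complex.I / (p : ℂ) ^ e) by
        simp [map_div₀, Complex.conj_I, Complex.conj_ofReal, map_ofNat]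
        ring]
    rw [Complex.exp_neg]
  have hconjmem := conjmem' hn hζ hconjζ
  exact main_aux' q f hq hf u hu _ hqprime hconjmem X X' hXX'
end

section
/- Suppose there exists a (v,m,k,λ)-SEDF in an abelian group G. Let p, q be primes with p^d exactly dividing v and q^f exactly dividing λ (d, f ≥ 1), and suppose q is a primitive root modulo p^d. Then the exponent of the Sylow p-subgroup of G satisfies exp(G_p) ≤ v / q^{⌈f/2⌉}. -/
open Polynomial

lemma cyclotomic_irreducible_zmod {q n : ℕ} (hq : q.Prime) (hn : 1 < n) (hqn : ¬ q ∣ n)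
    (hord : ∃ u : (ZMod n)ˣ, (u : ZMod n) = (q : ZMod n) ∧ orderOf u = n.totient) :
    Irreducible (Polynomial.cyclotomic n (ZMod q)) := by
  haveI : Fact q.Prime := ⟨hq⟩
  set K := ZMod q
  set Φ : K[X] := Polynomial.cyclotomic n K with hΦ
  have hnpos : 0 < n := lt_trans one_pos hn
  have hmonic : Φ.Monic := Polynomial.cyclotomic.monic n K
  have hΦne : Φ ≠ 0 := hmonic.ne_zero
  have hdeg : Φ.natDegree = n.totient := Polynomial.natDegree_cyclotomic n K
  have htotpos : 0 < n.totient := Nat.totient_pos.2 hnpos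
  have hΦnotunit : ¬ IsUnit Φ := by
    intro hu
    have := Polynomial.natDegree_eq_zero_of_isUnit hu
    omega
  obtain ⟨g, hgirr, hgdvd⟩ := WfDvdMonoid.exists_irreducible_factor hΦnotunit hΦne
  haveI : Fact (Irreducible g) := ⟨hgirr⟩
  have hg0 : g ≠ 0 := hgirr.ne_zero
  set L := AdjoinRoot g
  set μ : L := AdjoinRoot.root g
  -- μ is a root of the cyclotomic polynomial over L
  have hroot : (Polynomial.cyclotomic n L).IsRoot μ := by
    obtain ⟨h, hh⟩ := hgdvd
    have : (Polynomial.aeval μ) Φ = 0 := by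
      rw [hh, map_mul, AdjoinRoot.aeval_eq, AdjoinRoot.mk_self, zero_mul]
    rw [← Polynomial.map_cyclotomic n (algebraMap K L), Polynomial.IsRoot.def,
      Polynomial.eval_map, ← Polynomial.aeval_def]
    exact this
  haveI : CharP L q := charP_of_injective_algebraMap (algebraMap K L).injective q
  haveI : NeZero (n : L) := ⟨fun h0 => hqn ((CharP.cast_eq_zero_iff L q n).mp h0)⟩
  have hprimroot : IsPrimitiveRoot μ n := (Polynomial.isRoot_cyclotomic_iff).mp hroot
  -- L is a finite field of cardinality q ^ natDegree g
  let pb := AdjoinRoot.powerBasis hg0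
  haveI : Fintype L := Module.fintypeOfFintype pb.basis
  have hcardL : Fintype.card L = q ^ g.natDegree := by
    rw [Module.card_fintype pb.basis, ZMod.card q, Fintype.card_fin,
      AdjoinRoot.powerBasis_dim hg0]
  have hdgpos : 0 < g.natDegree := hgirr.natDegree_pos
  -- the order of μ in Lˣ is n, so n ∣ q ^ deg g  - 1
  have hu : IsUnit μ := hprimroot.isUnit hnpos.ne'
  have horderu : orderOf hu.unit = n := by
    rw [← orderOf_units, IsUnit.unit_spec, ← hprimroot.eq_orderOf]
  have hndvd : n ∣ q ^ g.natDegree - 1 := by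
    have := orderOf_dvd_card (x := hu.unit)
    rwa [horderu, Fintype.card_units, hcardL] at this
  -- hence totient n ∣ deg g
  obtain ⟨u, hucast, huord⟩ := hord
  have hqpow : ((q : ZMod n)) ^ g.natDegree = 1 := by
    have h1 : (1:ℕ) ≤ q ^ g.natDegree := Nat.one_le_pow _ _ hq.pos
    have : ((q ^ g.natDegree : ℕ) : ZMod n) = (((q ^ g.natDegree - 1) + 1 : ℕ) : ZMod n) := by
      rw [Nat.sub_add_cancel h1]
    rw [Nat.cast_pow] at this
    rw [this, Nat.cast_add, Nat.cast_one, (ZMod.natCast_eq_zero_iff _ _).mpr hndvd,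
      zero_add]
  have hupow : u ^ g.natDegree = 1 := by
    ext
    push_cast [hucast]
    exact hqpow
  have htotdvd : n.totient ∣ g.natDegree := huord ▸ orderOf_dvd_of_pow_eq_one hupow
  have hdgle : g.natDegree ≤ n.totient := hdeg ▸ Polynomial.natDegree_le_of_dvd hgdvd hΦne
  have hdgeq : g.natDegree = n.totient :=
    le_antisymm hdgle (Nat.le_of_dvd hdgpos htotdvd)
  -- hence the cofactor is a unit and Φ is irreducible
  obtain ⟨h, hh⟩ := hgdvd
  have hhne : h ≠ 0 := by rintro rfl; rw [mul_zero] at hh; exact hΦne hh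
  have hhdeg : h.natDegree = 0 := by
    have := Polynomial.natDegree_mul hg0 hhne
    rw [← hh, hdeg, hdgeq] at this
    omega
  have hhunit : IsUnit h := by
    rw [Polynomial.eq_C_of_natDegree_eq_zero hhdeg]
    refine Polynomial.isUnit_C.mpr (isUnit_iff_ne_zero.mpr ?_)
    intro hc
    apply hhne
    rw [Polynomial.eq_C_of_natDegree_eq_zero hhdeg, hc, map_zero]
  have hassoc : Associated g Φ := by
    rw [hh]
    exact associated_mul_unit_right g h hhunit
  exact hassoc.irreducible hgirr

open Polynomial

section CycRing

variable {n : ℕ}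

local notation "A" => AdjoinRoot (Polynomial.cyclotomic n ℤ)
local notation "ζ" => AdjoinRoot.root (Polynomial.cyclotomic n ℤ)

lemma cycA_isDomain (hn : 0 < n) : IsDomain A :=
  AdjoinRoot.isDomain_of_prime
    (UniqueFactorizationMonoid.irreducible_iff_prime.mp (Polynomial.cyclotomic.irreducible hn))

lemma cycA_nontrivial (hn : 0 < n) : Nontrivial A := by
  refine AdjoinRoot.nontrivial _ ?_
  rw [Polynomial.degree_cyclotomic]
  exact_mod_cast fun h => (Nat.totient_pos.2 hn).ne' (by exact_mod_cast h)

lemma cycA_intCast_injective (hn : 0 < n) :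
    Function.Injective (fun z : ℤ => (z : A)) := by
  haveI := cycA_nontrivial hn
  haveI : NoZeroSMulDivisors ℤ A :=
    ⟨fun h => ((AdjoinRoot.powerBasis' (Polynomial.cyclotomic.monic n ℤ)).basis.smul_eq_zero).mp h⟩
  intro a b hab
  have : (a - b) • (1 : A) = 0 := by
    rw [sub_smul, zsmul_eq_mul, zsmul_eq_mul, mul_one, mul_one, sub_eq_zero]
    exact hab
  rcases smul_eq_zero.mp this with h | h
  · omega
  · exact absurd h one_ne_zero

lemma cycA_pow_n (hn : 0 < n) : (ζ) ^ n = 1 := by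
  have hdvd : Polynomial.cyclotomic n ℤ ∣ X ^ n - 1 := Polynomial.cyclotomic.dvd_X_pow_sub_one n ℤ
  obtain ⟨h, hh⟩ := hdvd
  have h2 : AdjoinRoot.mk (Polynomial.cyclotomic n ℤ) (X ^ n - 1) = 0 := by
    rw [hh, map_mul, AdjoinRoot.mk_self, zero_mul]
  rw [map_sub, map_pow, map_one, AdjoinRoot.mk_X, sub_eq_zero] at h2
  exact h2

lemma cycA_pow_mod (hn : 0 < n) (i : ℕ) : (ζ) ^ i = (ζ) ^ (i % n) := by
  conv_lhs => rw [← Nat.mod_add_div i n]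
  rw [pow_add, pow_mul, cycA_pow_n hn, one_pow, mul_one]

end CycRing

section PrimeQ

variable {n q : ℕ}

local notation "A" => AdjoinRoot (Polynomial.cyclotomic n ℤ)

lemma cycA_prime_q (hn : 0 < n) (hq : q.Prime)
    (hirr : Irreducible (Polynomial.cyclotomic n (ZMod q))) :
    Prime ((q : ℤ) : A) := by
  haveI : Fact q.Prime := ⟨hq⟩
  haveI := cycA_nontrivial (n := n) hn
  set Φ : ℤ[X] := Polynomial.cyclotomic n ℤ with hΦ
  set I : Ideal ℤ := Ideal.span {(q : ℤ)} with hI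
  -- the quotient of A by q is isomorphic to (ZMod q)[X] ⧸ (cyclotomic n)
  have e0 := AdjoinRoot.quotAdjoinRootEquivQuotPolynomialQuot I Φ
  let e1 : (ℤ ⧸ I) ≃+* ZMod q := Int.quotientSpanNatEquivZMod q
  let e2 : (ℤ ⧸ I)[X] ≃+* (ZMod q)[X] := Polynomial.mapEquiv e1
  have hmapeq : Ideal.span {Polynomial.map (algebraMap (ZMod q) (ZMod q))
      (Polynomial.cyclotomic n (ZMod q))} =
      Ideal.map (e2 : (ℤ ⧸ I)[X] →+* (ZMod q)[X])
        (Ideal.span {Polynomial.map (Ideal.Quotient.mk I) Φ}) := by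
    rw [Ideal.map_span, Set.image_singleton]
    congr 1
    have : (e2 : (ℤ ⧸ I)[X] →+* (ZMod q)[X]) (Polynomial.map (Ideal.Quotient.mk I) Φ)
        = Polynomial.map (e1 : (ℤ ⧸ I) →+* ZMod q) (Polynomial.map (Ideal.Quotient.mk I) Φ) := rfl
    rw [this, Polynomial.map_map, hΦ, Polynomial.map_cyclotomic, Polynomial.map_cyclotomic]
  have e3 := Ideal.quotientEquiv (Ideal.span {Polynomial.map (Ideal.Quotient.mk I) Φ})
      (Ideal.span {Polynomial.map (algebraMap (ZMod q) (ZMod q))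
        (Polynomial.cyclotomic n (ZMod q))}) e2 hmapeq
  haveI hdom2 : IsDomain ((ZMod q)[X] ⧸ Ideal.span {Polynomial.map (algebraMap (ZMod q) (ZMod q))
      (Polynomial.cyclotomic n (ZMod q))}) := by
    rw [Polynomial.map_cyclotomic]
    have hpr : Prime (Polynomial.cyclotomic n (ZMod q)) :=
      UniqueFactorizationMonoid.irreducible_iff_prime.mp hirr
    exact AdjoinRoot.isDomain_of_prime hpr
  haveI hdom1 : IsDomain ((ℤ ⧸ I)[X] ⧸ Ideal.span {Polynomial.map (Ideal.Quotient.mk I) Φ}) :=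
    MulEquiv.isDomain _ e3.toMulEquiv
  haveI hdomA : IsDomain (A ⧸ Ideal.map (AdjoinRoot.of Φ) I) :=
    MulEquiv.isDomain _ e0.toMulEquiv
  have hprime : (Ideal.map (AdjoinRoot.of Φ) I).IsPrime :=
    (Ideal.Quotient.isDomain_iff_prime _).mp hdomA
  have hspan : Ideal.map (AdjoinRoot.of Φ) I = Ideal.span {((q : ℤ) : A)} := by
    rw [hI, Ideal.map_span, Set.image_singleton]
    simp
    rfl
  rw [hspan] at hprime
  have hqA0 : ((q : ℤ) : A) ≠ 0 := by
    intro h0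
    have h1 : ((q : ℤ) : A) = ((0 : ℤ) : A) := by simpa using h0
    have := cycA_intCast_injective (n := n) hn h1
    exact hq.ne_zero (by exact_mod_cast this)
  exact (Ideal.span_singleton_prime hqA0).mp hprime

end PrimeQ
open Polynomial Finset

lemma cycA_coeff_bound {p e q s w : ℕ} (hp : p.Prime) (he : 0 < e) (hq2 : 2 ≤ q)
    (c : ℕ → ℕ) (hc : ∀ t, c t ≤ w)
    (α : AdjoinRoot (Polynomial.cyclotomic (p ^ e) ℤ))
    (hα : α = ∑ t ∈ Finset.range (p ^ e),
      (c t : ℤ) • (AdjoinRoot.root (Polynomial.cyclotomic (p ^ e) ℤ)) ^ t)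
    (hα0 : α ≠ 0)
    (hdvd : (((q : ℤ) : AdjoinRoot (Polynomial.cyclotomic (p ^ e) ℤ))) ^ s ∣ α) :
    q ^ s ≤ w := by
  set ζ := AdjoinRoot.root (Polynomial.cyclotomic (p ^ e) ℤ) with hζ
  set N := p ^ (e - 1) with hN
  set D0 := N * (p - 1) with hD0
  have hp2 : 2 ≤ p := hp.two_le
  have hNpos : 0 < N := Nat.pow_pos hp.pos
  have hsplit : p ^ e = D0 + N := by
    have : p ^ e = N * p := by
      rw [hN, ← pow_succ]
      congr 1
      omega
    rw [this, hD0]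
    have : N * p = N * ((p - 1) + 1) := by congr 1; omega
    rw [this, Nat.mul_add, mul_one]
  have hnpos : 0 < p ^ e := Nat.pow_pos hp.pos
  -- the geometric relation
  have hgeom : ∑ i ∈ Finset.range p, ζ ^ (N * i) = 0 := by
    have hee : e - 1 + 1 = e := by omega
    have hcyc : Polynomial.cyclotomic (p ^ e) ℤ
        = ∑ i ∈ Finset.range p, ((X : ℤ[X]) ^ p ^ (e - 1)) ^ i := by
      have h := Polynomial.cyclotomic_prime_pow_eq_geom_sum (R := ℤ) (n := e - 1) hp
      rwa [hee] at h
    have h0 : AdjoinRoot.mk (Polynomial.cyclotomic (p ^ e) ℤ)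
        (∑ i ∈ Finset.range p, ((X : ℤ[X]) ^ p ^ (e - 1)) ^ i) = 0 := by
      rw [← hcyc]; exact AdjoinRoot.mk_self
    rw [map_sum] at h0
    simp only [map_pow, AdjoinRoot.mk_X] at h0
    convert h0 using 2 with i
    rw [pow_mul]
  have hrel : ∀ r : ℕ, ζ ^ (D0 + r)
      = -∑ i ∈ Finset.range (p - 1), ζ ^ (N * i + r) := by
    intro r
    have hps : Finset.range p = Finset.range ((p - 1) + 1) := by
      congr 1
      omega
    rw [hps, Finset.sum_range_succ] at hgeom
    have h1 : ζ ^ D0 = -∑ i ∈ Finset.range (p - 1), ζ ^ (N * i) := by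
      linear_combination hgeom
    calc ζ ^ (D0 + r) = ζ ^ D0 * ζ ^ r := by rw [pow_add]
      _ = (-∑ i ∈ Finset.range (p - 1), ζ ^ (N * i)) * ζ ^ r := by rw [h1]
      _ = -∑ i ∈ Finset.range (p - 1), ζ ^ (N * i + r) := by
          rw [neg_mul, Finset.sum_mul]
          congr 1
          refine Finset.sum_congr rfl fun i _ => ?_
          rw [pow_add]
  -- rewrite α in terms of the power basis coefficients
  set m : ℕ → ℤ := fun j => (c j : ℤ) - (c (D0 + j % N) : ℤ) with hm
  have hα2 : α = ∑ j ∈ Finset.range D0, m j • ζ ^ j := by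
    have hrange : Finset.range (p ^ e) = Finset.range (D0 + N) := by rw [hsplit]
    rw [hα, hrange]
    rw [Finset.range_eq_Ico, ← Finset.sum_Ico_consecutive _ (Nat.zero_le D0)
      (Nat.le_add_right D0 N), ← Finset.range_eq_Ico, Finset.sum_Ico_eq_sum_range]
    have hS2 : ∑ r ∈ Finset.range (D0 + N - D0), (c (D0 + r) : ℤ) • ζ ^ (D0 + r)
        = -∑ j ∈ Finset.range D0, (c (D0 + j % N) : ℤ) • ζ ^ j := by
      have hNN : D0 + N - D0 = N := by omega
      rw [hNN]
      have : ∀ r ∈ Finset.range N, (c (D0 + r) : ℤ) • ζ ^ (D0 + r)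
          = -∑ i ∈ Finset.range (p - 1), (c (D0 + r) : ℤ) • ζ ^ (N * i + r) := by
        intro r _
        rw [hrel r, smul_neg, Finset.smul_sum]
      rw [Finset.sum_congr rfl this]
      rw [Finset.sum_neg_distrib]
      congr 1
      rw [← Finset.sum_product']
      refine Finset.sum_nbij' (fun x => N * x.2 + x.1) (fun j => (j % N, j / N))
        ?_ ?_ ?_ ?_ ?_
      · rintro ⟨r, i⟩ hx
        simp only [Finset.mem_product, Finset.mem_range] at hx
        simp only [Finset.mem_range]
        have : N * i + r < N * (i + 1) := by
          rw [Nat.mul_add, mul_one]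
          omega
        calc N * i + r < N * (i + 1) := this
          _ ≤ N * (p - 1) := Nat.mul_le_mul_left N (by omega)
      · intro j hj
        simp only [Finset.mem_range] at hj
        simp only [Finset.mem_product, Finset.mem_range]
        constructor
        · exact Nat.mod_lt _ hNpos
        · rw [Nat.div_lt_iff_lt_mul hNpos]
          calc j < N * (p - 1) := hj
            _ = (p - 1) * N := Nat.mul_comm _ _
      · rintro ⟨r, i⟩ hx
        simp only [Finset.mem_product, Finset.mem_range] at hx
        have h1 : (N * i + r) % N = r := by
          rw [Nat.mul_add_mod]
          exact Nat.mod_eq_of_lt hx.1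
        have h2 : (N * i + r) / N = i := by
          rw [Nat.mul_add_div hNpos]
          rw [Nat.div_eq_of_lt hx.1, Nat.add_zero]
        simp [h1, h2]
      · intro j _
        exact Nat.div_add_mod j N
      · rintro ⟨r, i⟩ hx
        simp only [Finset.mem_product, Finset.mem_range] at hx
        have h1 : (N * i + r) % N = r := by
          rw [Nat.mul_add_mod]
          exact Nat.mod_eq_of_lt hx.1
        rw [h1]
    rw [hS2, ← sub_eq_add_neg, ← Finset.sum_sub_distrib]
    refine Finset.sum_congr rfl fun j _ => ?_
    rw [hm, sub_smul]
  -- identify the coefficients with basis coordinates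
  have hmonic := Polynomial.cyclotomic.monic (p ^ e) ℤ
  set pb := AdjoinRoot.powerBasis' hmonic with hpb
  have hdim : pb.dim = D0 := by
    rw [hpb, AdjoinRoot.powerBasis'_dim, Polynomial.natDegree_cyclotomic,
      Nat.totient_prime_pow hp he]
  set b := pb.basis.reindex (finCongr hdim) with hb
  have hbval : ∀ j : Fin D0, b j = ζ ^ (j : ℕ) := by
    intro j
    rw [hb, Module.Basis.reindex_apply, PowerBasis.coe_basis]
    simp only [hpb, AdjoinRoot.powerBasis'_gen, finCongr_symm, finCongr_apply, Fin.coe_cast]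
    rfl
  have hα3 : α = ∑ j : Fin D0, m (j : ℕ) • b j := by
    rw [hα2, ← Fin.sum_univ_eq_sum_range (fun j => m j • ζ ^ j) D0]
    refine Finset.sum_congr rfl fun j _ => ?_
    rw [hbval j]
  have hrepr : ∀ j : Fin D0, b.repr α j = m (j : ℕ) := by
    intro j
    rw [hα3, Module.Basis.repr_sum_self]
  -- divisibility of coordinates
  obtain ⟨γ, hγ⟩ := hdvd
  have hγ' : α = ((q : ℤ) ^ s) • γ := by
    rw [hγ, zsmul_eq_mul]
    push_cast
    ring
  have hdvdm : ∀ j : Fin D0, (q : ℤ) ^ s ∣ m (j : ℕ) := by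
    intro j
    refine ⟨b.repr γ j, ?_⟩
    rw [← hrepr j, hγ', map_smul]
    simp
  -- some coordinate is nonzero
  have hex : ∃ j : Fin D0, m (j : ℕ) ≠ 0 := by
    by_contra hno
    push_neg at hno
    apply hα0
    rw [hα3]
    refine Finset.sum_eq_zero fun j _ => ?_
    rw [hno j, zero_smul]
  obtain ⟨j, hj⟩ := hex
  have hble : (q : ℤ) ^ s ≤ |m (j : ℕ)| := by
    refine Int.le_of_dvd (abs_pos.mpr hj) ((dvd_abs _ _).mpr (hdvdm j))
  have hc1 : (c (j : ℕ) : ℤ) ≤ w := by exact_mod_cast hc _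
  have hc2 : (c (D0 + (j : ℕ) % N) : ℤ) ≤ w := by exact_mod_cast hc _
  have habs : |m (j : ℕ)| ≤ (w : ℤ) := by
    rw [hm, abs_le]
    constructor <;> simp only <;> omega
  have : (q : ℤ) ^ s ≤ (w : ℤ) := le_trans hble habs
  exact_mod_cast this
open Finset

lemma sylow_exponent_surj {G : Type} [CommGroup G] [Fintype G] {p : ℕ} (hp : p.Prime)
    (P : Sylow p G) :
    ∃ (E : ℕ) (φ : G →* Multiplicative (ZMod (p ^ E))),
      Monoid.exponent ↥(P : Subgroup G) = p ^ E ∧ Function.Surjective φ := by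
  classical
  haveI : Fact p.Prime := ⟨hp⟩
  obtain ⟨ι, hι, nn, h1, ⟨eqv⟩⟩ := CommGroup.equiv_prod_multiplicative_zmod_of_finite G
  set E := Finset.univ.sup (fun i => (nn i).factorization p) with hE
  haveI : ∀ i, NeZero (nn i) := fun i => ⟨by have := h1 i; omega⟩
  -- Part A : exponent P divides p ^ E
  have hA : Monoid.exponent ↥(P : Subgroup G) ∣ p ^ E := by
    refine Monoid.exponent_dvd_of_forall_pow_eq_one fun y => ?_
    obtain ⟨k, hk⟩ := P.2 y
    have hyk : ((y : G)) ^ (p ^ k) = 1 := by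
      have := congrArg (Subtype.val) hk
      simpa using this
    set z := eqv (y : G) with hz
    have hzk : z ^ (p ^ k) = 1 := by rw [hz, ← map_pow, hyk, map_one]
    have hcomp : ∀ i, (z i) ^ (p ^ E) = 1 := by
      intro i
      have hzik : (z i) ^ (p ^ k) = 1 := by
        have := congrFun hzk i
        simpa using this
      have hdvd1 : orderOf (z i) ∣ p ^ k := orderOf_dvd_of_pow_eq_one hzik
      obtain ⟨t, ht, hordt⟩ := (Nat.dvd_prime_pow hp).mp hdvd1
      have hdvd2 : orderOf (z i) ∣ nn i := by
        have := orderOf_dvd_card (x := z i)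
        rwa [Fintype.card_multiplicative, ZMod.card] at this
      have htle : t ≤ E := by
        have : p ^ t ∣ nn i := hordt ▸ hdvd2
        have h2 := (Nat.Prime.pow_dvd_iff_le_factorization hp (NeZero.ne (nn i))).mp this
        exact le_trans h2 (Finset.le_sup (f := fun i => (nn i).factorization p) (Finset.mem_univ i))
      refine orderOf_dvd_iff_pow_eq_one.mp ?_
      rw [hordt]
      exact pow_dvd_pow p htle
    have hzE : z ^ (p ^ E) = 1 := by
      funext i
      have := hcomp i
      simpa using this
    have : ((y : G)) ^ (p ^ E) = 1 := by
      apply eqv.injective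
      rw [map_pow, ← hz, hzE, map_one]
    exact Subtype.ext (by simpa using this)
  by_cases hE0 : E = 0
  · -- trivial case
    refine ⟨0, 1, ?_, ?_⟩
    · have := hA
      rw [hE0, pow_zero] at this
      rw [pow_zero]
      exact Nat.eq_one_of_dvd_one (by exact_mod_cast this)
    · intro x
      refine ⟨1, ?_⟩
      have : Subsingleton (ZMod (p ^ 0)) := by rw [pow_zero]; infer_instance
      apply Multiplicative.toAdd.injective
      exact Subsingleton.elim _ _
  · -- nontrivial case
    haveI : Nonempty ι := by
      by_contra hni
      rw [not_nonempty_iff] at hni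
      apply hE0
      rw [hE, Finset.univ_eq_empty, Finset.sup_empty]
      rfl
    obtain ⟨i₀, -, hi₀⟩ := Finset.exists_mem_eq_sup Finset.univ Finset.univ_nonempty
      (fun i => (nn i).factorization p)
    rw [← hE] at hi₀
    have hpEdvd : p ^ E ∣ nn i₀ := by
      rw [hi₀]
      exact Nat.ordProj_dvd _ _
    -- Part B : p ^ E divides the exponent
    have hB : p ^ E ∣ Monoid.exponent ↥(P : Subgroup G) := by
      set a : Multiplicative (ZMod (nn i₀)) := Multiplicative.ofAdd 1 with ha
      have horda : orderOf a = nn i₀ := by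
        rw [ha, orderOf_ofAdd_eq_addOrderOf, ZMod.addOrderOf_one]
      set y : G := eqv.symm (Pi.mulSingle i₀ a) with hy
      have hordy : orderOf y = nn i₀ := by
        have := orderOf_injective eqv.symm.toMonoidHom eqv.symm.injective
          (Pi.mulSingle i₀ a)
        rw [hy]
        have h2 : eqv.symm.toMonoidHom (Pi.mulSingle i₀ a) = eqv.symm (Pi.mulSingle i₀ a) := rfl
        rw [h2] at this
        rw [this, orderOf_piMulSingle, horda]
      set x : G := y ^ (nn i₀ / p ^ E) with hx
      have hordx : orderOf x = p ^ E := by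
        rw [hx, orderOf_pow, hordy]
        have hKdvd : nn i₀ / p ^ E ∣ nn i₀ := Nat.div_dvd_of_dvd hpEdvd
        rw [Nat.gcd_eq_right hKdvd]
        exact Nat.div_div_self hpEdvd (NeZero.ne (nn i₀))
      have hPG : IsPGroup p ↥(Subgroup.zpowers x) := by
        rw [IsPGroup.iff_card]
        exact ⟨E, by rw [Nat.card_zpowers, hordx]⟩
      obtain ⟨Q, hQ⟩ := hPG.exists_le_sylow
      haveI := Sylow.unique_of_normal Q inferInstance
      have hPQ : P = Q := Subsingleton.elim _ _
      have hxP : x ∈ (P : Subgroup G) := by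
        rw [hPQ]
        exact hQ (Subgroup.mem_zpowers x)
      have : orderOf (⟨x, hxP⟩ : ↥(P : Subgroup G)) = p ^ E := by
        rw [Subgroup.orderOf_mk, hordx]
      exact this ▸ Monoid.order_dvd_exponent _
    refine ⟨E, ?_, Nat.dvd_antisymm hA hB, ?_⟩
    · exact ((ZMod.castHom hpEdvd (ZMod (p ^ E))).toAddMonoidHom.toMultiplicative).comp
        ((Pi.evalMonoidHom _ i₀).comp eqv.toMonoidHom)
    · intro t
      obtain ⟨kt, hkt⟩ := ZMod.natCast_zmod_surjective (Multiplicative.toAdd t)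
      refine ⟨eqv.symm (Pi.mulSingle i₀ (Multiplicative.ofAdd (kt : ZMod (nn i₀)))), ?_⟩
      simp only [MonoidHom.comp_apply]
      have h1 : eqv.toMonoidHom (eqv.symm (Pi.mulSingle i₀
          (Multiplicative.ofAdd (kt : ZMod (nn i₀)))))
          = Pi.mulSingle i₀ (Multiplicative.ofAdd (kt : ZMod (nn i₀))) := by
        simp
      rw [h1]
      have h2 : (Pi.evalMonoidHom (fun i => Multiplicative (ZMod (nn i))) i₀) (Pi.mulSingle i₀
          (Multiplicative.ofAdd (kt : ZMod (nn i₀))))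
          = Multiplicative.ofAdd (kt : ZMod (nn i₀)) := by
        simp [Pi.evalMonoidHom]
      rw [h2]
      apply Multiplicative.toAdd.injective
      simp only [AddMonoidHom.toMultiplicative, ZMod.castHom_apply]
      rw [← hkt]
      have h3 := map_natCast (ZMod.castHom hpEdvd (ZMod (p ^ E))) kt
      rw [ZMod.castHom_apply] at h3
      exact h3

lemma dvd_split {A : Type*} [CommRing A] [IsDomain A] {qA : A} (hqA : Prime qA)
    {α β L : A} (hprod : α * β = -L) :
    ∀ f : ℕ, qA ^ f ∣ L → ∃ i j : ℕ, i + j = f ∧ qA ^ i ∣ α ∧ qA ^ j ∣ β := by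
  intro f
  induction f with
  | zero => exact fun _ => ⟨0, 0, rfl, by simp, by simp⟩
  | succ f ih =>
    intro hdvd
    obtain ⟨i, j, hij, ⟨α', hα'⟩, ⟨β', hβ'⟩⟩ :=
      ih (dvd_trans (pow_dvd_pow qA (Nat.le_succ f)) hdvd)
    have h1 : qA ^ (f + 1) ∣ α * β := by
      rw [hprod]
      exact hdvd.neg_right
    have h2 : qA ^ f * qA ∣ qA ^ f * (α' * β') := by
      have : α * β = qA ^ f * (α' * β') := by
        rw [hα', hβ', ← hij, pow_add]
        ring
      rw [this, pow_succ] at h1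
      exact h1
    have h3 : qA ∣ α' * β' :=
      (mul_dvd_mul_iff_left (pow_ne_zero f hqA.ne_zero)).mp h2
    rcases hqA.dvd_or_dvd h3 with h | h
    · obtain ⟨c, hc⟩ := h
      exact ⟨i + 1, j, by omega, ⟨c, by rw [hα', hc, pow_succ]; ring⟩, ⟨β', hβ'⟩⟩
    · obtain ⟨c, hc⟩ := h
      exact ⟨i, j + 1, by omega, ⟨α', hα'⟩, ⟨c, by rw [hβ', hc, pow_succ]; ring⟩⟩

open Finset

theorem sedf_exponent_bound {G : Type} [CommGroup G] [Fintype G]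
    [DecidableEq G] {v m k lam : ℕ} (D : Fin m → Finset G)
    (h : IsSEDF v m k lam D) (p q d f : ℕ) (hp : p.Prime) (hq : q.Prime)
    (hd : 0 < d) (hf : 0 < f)
    (hpv : p ^ d ∣ v ∧ ¬ p ^ (d + 1) ∣ v)
    (hql : q ^ f ∣ lam ∧ ¬ q ^ (f + 1) ∣ lam)
    (hprim : ∃ qu : (ZMod (p ^ d))ˣ, (qu : ZMod (p ^ d)) = (q : ZMod (p ^ d)) ∧
      ∀ x : (ZMod (p ^ d))ˣ, x ∈ Subgroup.zpowers qu)
    (P : Sylow p G) :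
    Monoid.exponent ↥(P : Subgroup G) * q ^ ((f + 1) / 2) ≤ v := by
  classical
  obtain ⟨hcard, hm2, hk, hdisj, heq⟩ := h
  haveI : Fact p.Prime := ⟨hp⟩
  haveI : Fact q.Prime := ⟨hq⟩
  have hv0 : v ≠ 0 := by
    rw [← hcard]
    exact Fintype.card_ne_zero
  have hlam0 : lam ≠ 0 := by
    intro h0
    exact hql.2 (h0 ▸ dvd_zero _)
  -- the p-adic valuation of v is d
  have hdfact : v.factorization p = d := by
    have h1 : d ≤ v.factorization p :=
      (Nat.Prime.pow_dvd_iff_le_factorization hp hv0).mp hpv.1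
    have h2 : ¬ (d + 1 ≤ v.factorization p) := fun hc =>
      hpv.2 ((Nat.Prime.pow_dvd_iff_le_factorization hp hv0).mpr hc)
    omega
  have hPcard : Nat.card ↥(P : Subgroup G) = p ^ d := by
    rw [Sylow.card_eq_multiplicity]
    congr 1
    rw [Nat.card_eq_fintype_card, hcard, hdfact]
  obtain ⟨E, φ, hexp, hφ⟩ := sylow_exponent_surj hp P
  -- E is positive and at most d
  have hEd : E ≤ d := by
    have h1 : Monoid.exponent ↥(P : Subgroup G) ∣ p ^ d :=
      hPcard ▸ Group.exponent_dvd_nat_card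
    rw [hexp] at h1
    exact (Nat.pow_dvd_pow_iff_le_right hp.one_lt).mp h1
  have hE1 : 0 < E := by
    rcases Nat.eq_zero_or_pos E with h0 | h
    · exfalso
      rw [h0, pow_zero] at hexp
      haveI := Monoid.exp_eq_one_iff.mp hexp
      have hone : Nat.card ↥(P : Subgroup G) = 1 :=
        Nat.card_eq_one_iff_unique.mpr ⟨inferInstance, ⟨1⟩⟩
      rw [hPcard] at hone
      have : 2 ≤ p ^ d := by
        calc 2 ≤ p := hp.two_le
          _ = p ^ 1 := (pow_one p).symm
          _ ≤ p ^ d := Nat.pow_le_pow_right hp.pos hd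
      omega
    · exact h
  haveI : NeZero (p ^ E) := ⟨(Nat.pow_pos hp.pos).ne'⟩
  -- q is not p, and q is coprime to p ^ E
  obtain ⟨qu, hqu, hgen⟩ := hprim
  have hqcop : Nat.Coprime q (p ^ d) := by
    have : IsUnit ((q : ℕ) : ZMod (p ^ d)) := ⟨qu, hqu⟩
    exact (ZMod.isUnit_iff_coprime q (p ^ d)).mp this
  have hqp : q ≠ p := by
    intro hqp
    rw [hqp] at hqcop
    have h2 : p ∣ p ^ d := dvd_pow_self p (by omega)
    have h3 : p = 1 := Nat.Coprime.eq_one_of_dvd hqcop h2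
    exact hp.one_lt.ne' h3
  have hqn : ¬ q ∣ p ^ E := by
    intro hdvd
    exact hqp (hq.dvd_of_dvd_pow hdvd |> fun hqd => (Nat.prime_dvd_prime_iff_eq hq hp).mp hqd)
  -- the order of q mod p ^ E is the full totient
  have hord : ∃ u : (ZMod (p ^ E))ˣ, (u : ZMod (p ^ E)) = (q : ZMod (p ^ E)) ∧
      orderOf u = (p ^ E).totient := by
    have hdvdpow : p ^ E ∣ p ^ d := pow_dvd_pow p hEd
    set u := ZMod.unitsMap hdvdpow qu with hu
    refine ⟨u, ?_, ?_⟩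
    · rw [hu, ZMod.unitsMap_def, Units.coe_map]
      show ZMod.castHom hdvdpow (ZMod (p ^ E)) (qu : ZMod (p ^ d)) = _
      rw [hqu, map_natCast]
    · have hsurj : ∀ x : (ZMod (p ^ E))ˣ, x ∈ Subgroup.zpowers u := by
        intro x
        obtain ⟨y, hy⟩ := ZMod.unitsMap_surjective hdvdpow x
        obtain ⟨z, hz⟩ := hgen y
        refine ⟨z, ?_⟩
        rw [← hy, ← hz, hu]
        simp [map_zpow]
      rw [orderOf_eq_card_of_forall_mem_zpowers hsurj, Nat.card_eq_fintype_card,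
        ZMod.card_units_eq_totient]
  have hirr : Irreducible (Polynomial.cyclotomic (p ^ E) (ZMod q)) :=
    cyclotomic_irreducible_zmod hq (one_lt_pow₀ hp.one_lt hE1.ne') hqn hord
  -- set up the cyclotomic ring and the character
  have hnpos : 0 < p ^ E := Nat.pow_pos hp.pos
  haveI hdomA := cycA_isDomain (n := p ^ E) hnpos
  have hprimeq : Prime ((q : ℤ) : AdjoinRoot (Polynomial.cyclotomic (p ^ E) ℤ)) :=
    cycA_prime_q hnpos hq hirr
  set ζ : AdjoinRoot (Polynomial.cyclotomic (p ^ E) ℤ) :=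
    AdjoinRoot.root (Polynomial.cyclotomic (p ^ E) ℤ) with hζdef
  set χ : G →* AdjoinRoot (Polynomial.cyclotomic (p ^ E) ℤ) :=
    { toFun := fun g => ζ ^ (Multiplicative.toAdd (φ g)).val,
      map_one' := by
        show ζ ^ (Multiplicative.toAdd (φ 1)).val = 1
        rw [map_one, toAdd_one, ZMod.val_zero, pow_zero],
      map_mul' := fun a b => by
        show ζ ^ (Multiplicative.toAdd (φ (a * b))).val
          = ζ ^ (Multiplicative.toAdd (φ a)).val * ζ ^ (Multiplicative.toAdd (φ b)).val
        rw [map_mul, toAdd_mul, ZMod.val_add, ← cycA_pow_mod hnpos, pow_add] } with hχdef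
  have hχval : ∀ g : G, χ g = ζ ^ (Multiplicative.toAdd (φ g)).val := fun g => rfl
  -- fibers of φ all have the same size w, and (p ^ E) * w = v
  set w := Nat.card ↥(MonoidHom.ker φ) with hwdef
  have hnw : p ^ E * w = v := by
    have h1 := Subgroup.card_eq_card_quotient_mul_card_subgroup (MonoidHom.ker φ)
    have h2 : Nat.card (G ⧸ MonoidHom.ker φ) = p ^ E := by
      rw [Nat.card_congr (QuotientGroup.quotientKerEquivOfSurjective φ hφ).toEquiv,
        Nat.card_eq_fintype_card, Fintype.card_multiplicative, ZMod.card]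
    rw [h2] at h1
    rw [hwdef, ← h1, Nat.card_eq_fintype_card, hcard]
  have hfiber : ∀ x : Multiplicative (ZMod (p ^ E)),
      (Finset.univ.filter fun g => φ g = x).card = w := by
    intro x
    obtain ⟨g₀, hg₀⟩ := hφ x
    have e : {g : G // φ g = x} ≃ {g : G // g ∈ MonoidHom.ker φ} :=
      { toFun := fun gh => ⟨g₀⁻¹ * gh.1, by
          rw [MonoidHom.mem_ker, map_mul, map_inv, gh.2, hg₀, inv_mul_cancel]⟩
        invFun := fun gh => ⟨g₀ * gh.1, by
          have h3 := gh.2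
          rw [MonoidHom.mem_ker] at h3
          rw [map_mul, h3, hg₀, mul_one]⟩
        left_inv := fun gh => by
          ext
          show g₀ * (g₀⁻¹ * gh.1) = gh.1
          group
        right_inv := fun gh => by
          ext
          show g₀⁻¹ * (g₀ * gh.1) = gh.1
          group }
    calc (Finset.univ.filter fun g => φ g = x).card
        = Fintype.card {g : G // φ g = x} := (Fintype.card_subtype _).symm
      _ = Nat.card {g : G // φ g = x} := (Nat.card_eq_fintype_card).symm
      _ = Nat.card ↥(MonoidHom.ker φ) := Nat.card_congr e
  -- coefficient representation of character sums
  set cS : Finset G → ℕ → ℕ :=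
    fun S t => (S.filter fun g => (Multiplicative.toAdd (φ g)).val = t).card with hcSdef
  have hbound : ∀ (S : Finset G) (t : ℕ), cS S t ≤ w := by
    intro S t
    rcases lt_or_ge t (p ^ E) with ht | ht
    · rw [← hfiber (Multiplicative.ofAdd ((t : ℕ) : ZMod (p ^ E)))]
      refine Finset.card_le_card ?_
      intro g hg
      rw [Finset.mem_filter] at hg ⊢
      refine ⟨Finset.mem_univ g, ?_⟩
      have h4 : Multiplicative.toAdd (φ g) = ((t : ℕ) : ZMod (p ^ E)) := by
        have h5 := ZMod.natCast_rightInverse (n := p ^ E) (Multiplicative.toAdd (φ g))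
        rw [← h5, hg.2]
      apply Multiplicative.toAdd.injective
      simpa using h4
    · rw [hcSdef]
      simp only
      rw [Finset.card_eq_zero.mpr]
      · omega
      · rw [Finset.filter_eq_empty_iff]
        intro g _
        have := ZMod.val_lt (Multiplicative.toAdd (φ g))
        omega
  have hsum : ∀ S : Finset G,
      ∑ g ∈ S, χ g = ∑ t ∈ Finset.range (p ^ E), (cS S t : ℤ) • ζ ^ t := by
    intro S
    have h1 : ∑ g ∈ S, χ g = ∑ g ∈ S, ζ ^ (Multiplicative.toAdd (φ g)).val :=
      Finset.sum_congr rfl fun g _ => hχval g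
    rw [h1, Finset.sum_comp (fun t => ζ ^ t) (fun g => (Multiplicative.toAdd (φ g)).val)]
    rw [Finset.sum_subset (Finset.image_subset_iff.mpr ?_)]
    · refine Finset.sum_congr rfl fun t _ => ?_
      rw [natCast_zsmul]
    · intro t _ ht
      rw [Finset.card_eq_zero.mpr, zero_smul]
      rw [Finset.filter_eq_empty_iff]
      intro g hg
      intro hval
      exact ht (Finset.mem_image.mpr ⟨g, hg, hval⟩)
    · intro g _
      rw [Finset.mem_range]
      exact ZMod.val_lt _
  -- the sum of the character over all of G vanishes
  have hgeomsum : ∑ t ∈ Finset.range (p ^ E), ζ ^ t = 0 := by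
    have h1 := Polynomial.prod_cyclotomic_eq_geom_sum (R := ℤ) hnpos
    have h2 : AdjoinRoot.mk (Polynomial.cyclotomic (p ^ E) ℤ)
        (∑ t ∈ Finset.range (p ^ E), (Polynomial.X : ℤ[X]) ^ t) = 0 := by
      rw [← h1, map_prod]
      refine Finset.prod_eq_zero (i := p ^ E) ?_ ?_
      · rw [Finset.mem_erase]
        exact ⟨(one_lt_pow₀ hp.one_lt hE1.ne').ne', Nat.mem_divisors_self _ hnpos.ne'⟩
      · exact AdjoinRoot.mk_self
    rw [map_sum] at h2
    simpa [AdjoinRoot.mk_X] using h2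
  have huniv : ∑ g : G, χ g = 0 := by
    rw [hsum Finset.univ]
    have hcuniv : ∀ t ∈ Finset.range (p ^ E), (cS Finset.univ t : ℤ) • ζ ^ t
        = (w : ℤ) • ζ ^ t := by
      intro t ht
      rw [Finset.mem_range] at ht
      congr 1
      rw [hcSdef]
      simp only
      rw [← hfiber (Multiplicative.ofAdd ((t : ℕ) : ZMod (p ^ E)))]
      have hfeq : (Finset.univ.filter fun g => (Multiplicative.toAdd (φ g)).val = t)
          = (Finset.univ.filter fun g =>
              φ g = Multiplicative.ofAdd ((t : ℕ) : ZMod (p ^ E))) := by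
        refine Finset.filter_congr fun g _ => ?_
        constructor
        · intro hval
          apply Multiplicative.toAdd.injective
          have h5 := ZMod.natCast_rightInverse (n := p ^ E) (Multiplicative.toAdd (φ g))
          rw [hval] at h5
          simpa using h5.symm
        · intro hφg
          have h6 : Multiplicative.toAdd (φ g) = ((t : ℕ) : ZMod (p ^ E)) := by
            rw [hφg]
            simp
          rw [h6, ZMod.val_cast_of_lt ht]
      rw [hfeq]
    rw [Finset.sum_congr rfl hcuniv, ← Finset.smul_sum, hgeomsum, smul_zero]
  -- apply the algebra homomorphism to the SEDF identity
  set Λ := (MonoidAlgebra.lift ℤ (AdjoinRoot (Polynomial.cyclotomic (p ^ E) ℤ)) G) χ with hΛdef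
  have hm0 : 0 < m := by omega
  set j₀ : Fin m := ⟨0, hm0⟩ with hj₀
  set S₁ : Finset G := D j₀ with hS₁
  set S₂ : Finset G := (Finset.univ.erase j₀).biUnion (fun i => (D i).image (·⁻¹)) with hS₂
  set α := ∑ g ∈ S₁, χ g with hα
  set β := ∑ g ∈ S₂, χ g with hβ
  have hΛof : ∀ S : Finset G, Λ (∑ g ∈ S, MonoidAlgebra.of ℤ G g) = ∑ g ∈ S, χ g := by
    intro S
    rw [map_sum]
    exact Finset.sum_congr rfl fun g _ => MonoidAlgebra.lift_of χ g
  have hpd : (↑(Finset.univ.erase j₀) : Set (Fin m)).PairwiseDisjoint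
      (fun i => (D i).image (·⁻¹)) := by
    intro a _ b _ hab
    exact (Finset.disjoint_image inv_injective).mpr (hdisj a b hab)
  have hid : α * β = -((lam : ℤ) : AdjoinRoot (Polynomial.cyclotomic (p ^ E) ℤ)) := by
    have h0 := congrArg Λ (heq j₀)
    rw [map_mul] at h0
    have hf1 : Λ (∑ d ∈ D j₀, MonoidAlgebra.of ℤ G d) = α := hΛof _
    have hf2 : Λ (∑ i ∈ Finset.univ.erase j₀, ∑ d ∈ D i, MonoidAlgebra.of ℤ G d⁻¹) = β := by
      rw [map_sum]
      have hstep : ∀ i ∈ Finset.univ.erase j₀,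
          Λ (∑ d ∈ D i, MonoidAlgebra.of ℤ G d⁻¹) = ∑ g ∈ (D i).image (·⁻¹), χ g := by
        intro i _
        rw [map_sum, Finset.sum_image (fun a _ b _ hab => inv_injective hab)]
        exact Finset.sum_congr rfl fun g _ => MonoidAlgebra.lift_of χ g⁻¹
      rw [Finset.sum_congr rfl hstep, hβ, hS₂, Finset.sum_biUnion hpd]
    have hf3 : Λ ((lam : ℤ) • ((∑ g : G, MonoidAlgebra.of ℤ G g) - 1))
        = -((lam : ℤ) : AdjoinRoot (Polynomial.cyclotomic (p ^ E) ℤ)) := by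
      rw [map_zsmul, map_sub, map_one, hΛof Finset.univ, huniv, zero_sub, smul_neg]
      congr 1
      rw [zsmul_eq_mul, mul_one]
    rw [hf1, hf2, hf3] at h0
    exact h0
  have hL0 : ((lam : ℤ) : AdjoinRoot (Polynomial.cyclotomic (p ^ E) ℤ)) ≠ 0 := by
    intro h0
    have h1 : ((lam : ℤ) : AdjoinRoot (Polynomial.cyclotomic (p ^ E) ℤ))
        = ((0 : ℤ) : AdjoinRoot (Polynomial.cyclotomic (p ^ E) ℤ)) := by simpa using h0
    have := cycA_intCast_injective hnpos h1
    exact hlam0 (by exact_mod_cast this)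
  have hLdvd : ((q : ℤ) : AdjoinRoot (Polynomial.cyclotomic (p ^ E) ℤ)) ^ f
      ∣ ((lam : ℤ) : AdjoinRoot (Polynomial.cyclotomic (p ^ E) ℤ)) := by
    obtain ⟨c, hc⟩ := hql.1
    refine ⟨((c : ℤ) : AdjoinRoot (Polynomial.cyclotomic (p ^ E) ℤ)), ?_⟩
    rw [hc]
    push_cast
    ring
  obtain ⟨i, j, hij, hdi, hdj⟩ := dvd_split hprimeq hid f hLdvd
  have hα0 : α ≠ 0 := by
    intro h0
    rw [h0, zero_mul] at hid
    exact hL0 (neg_eq_zero.mp hid.symm)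
  have hβ0 : β ≠ 0 := by
    intro h0
    rw [h0, mul_zero] at hid
    exact hL0 (neg_eq_zero.mp hid.symm)
  have hcases : (f + 1) / 2 ≤ i ∨ (f + 1) / 2 ≤ j := by omega
  have hwbound : q ^ ((f + 1) / 2) ≤ w := by
    rcases hcases with hcase | hcase
    · exact cycA_coeff_bound hp hE1 hq.two_le (cS S₁) (hbound S₁) α (hα ▸ hsum S₁) hα0
        (dvd_trans (pow_dvd_pow _ hcase) hdi)
    · exact cycA_coeff_bound hp hE1 hq.two_le (cS S₂) (hbound S₂) β (hβ ▸ hsum S₂) hβ0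
        (dvd_trans (pow_dvd_pow _ hcase) hdj)
  rw [hexp]
  calc p ^ E * q ^ ((f + 1) / 2) ≤ p ^ E * w := Nat.mul_le_mul_left _ hwbound
    _ = v := hnw
end

section
/- Let {D₁,…,Dₘ} be a nontrivial (v,m,k,λ)-SEDF in an abelian group G with m > 2, let D = ⋃ᵢ Dᵢ, and let χ be a nonprincipal character with χ(D) ≠ 0. Write √(1 + 4λ/|χ(D)|²) = b/a with coprime positive integers a < b (such a rational representation exists). Then: (1) 2b divides bm − a(m−2), and b divides m−2; (2) (b−a) divides (b+a)λ and (b+a) divides (b−a)λ; (3) (b²−a²) divides 4λ, and if b+a is odd then (b²−a²) divides λ. -/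
open Finset

set_option maxHeartbeats 1000000

open Finset

lemma rat_of_intIntegral {x : ℂ} (hx : IsIntegral ℤ x) {q : ℚ} (hq : (q:ℂ) = x) :
    ∃ y : ℤ, (y:ℚ) = q := by
  have h2 : IsIntegral ℤ (q : ℚ) := by
    refine (isIntegral_algHom_iff (B := ℂ) ((algebraMap ℚ ℂ).toIntAlgHom)
      (algebraMap ℚ ℂ).injective).mp ?_
    show IsIntegral ℤ ((algebraMap ℚ ℂ) q)
    simpa [hq] using hx
  obtain ⟨y, hy⟩ := IsIntegrallyClosed.isIntegral_iff.mp h2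
  exact ⟨y, by simpa using hy⟩

open Polynomial in
lemma isIntegral_of_pow_eq_one {x : ℂ} {n : ℕ} (hn : n ≠ 0) (hx : x ^ n = 1) :
    IsIntegral ℤ x := by
  refine ⟨X ^ n - C 1, monic_X_pow_sub_C 1 hn, ?_⟩
  simp [eval₂_sub, eval₂_pow, hx]

lemma char_sum_zero {G : Type} [CommGroup G] [Fintype G] (χ : G →* ℂ) (hχ : χ ≠ 1) :
    ∑ g : G, χ g = 0 := by
  obtain ⟨g₀, hg₀⟩ : ∃ g, χ g ≠ 1 := by
    by_contra hc
    push_neg at hc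
    exact hχ (MonoidHom.ext fun g => by simp [hc g])
  have h1 : χ g₀ * ∑ g : G, χ g = ∑ g : G, χ g := by
    rw [Finset.mul_sum]
    simp_rw [← map_mul]
    exact Fintype.sum_equiv (Equiv.mulLeft g₀) _ _ (fun g => rfl)
  have := sub_eq_zero.mpr h1
  rcases mul_eq_zero.mp (by linear_combination this : (χ g₀ - 1) * ∑ g : G, χ g = 0) with h | h
  · exact absurd (by linear_combination h) hg₀
  · exact h



theorem sedf_ab_divisibility {G : Type} [CommGroup G] [Fintype G]
    [DecidableEq G] {v m k lam : ℕ} (D : Fin m → Finset G)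
    (h : IsSEDF v m k lam D) (hk : 1 < k) (hm : 2 < m)
    (χ : G →* ℂ) (hχ : χ ≠ 1)
    (hχD : ∑ d ∈ Finset.univ.biUnion D, χ d ≠ 0)
    (a b : ℕ) (ha : 0 < a) (hab : a < b) (hco : Nat.Coprime a b)
    (hrat : Real.sqrt (1 + 4 * lam /
        ‖∑ d ∈ Finset.univ.biUnion D, χ d‖ ^ 2) = (b : ℝ) / a) :
    ((2 * b : ℤ) ∣ (b : ℤ) * m - (a : ℤ) * ((m : ℤ) - 2) ∧ (b : ℤ) ∣ (m : ℤ) - 2) ∧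
    (((b : ℤ) - a) ∣ ((b : ℤ) + a) * lam ∧ ((b : ℤ) + a) ∣ ((b : ℤ) - a) * lam) ∧
    (((b : ℤ) ^ 2 - (a : ℤ) ^ 2) ∣ 4 * lam ∧
      (Odd (b + a) → ((b : ℤ) ^ 2 - (a : ℤ) ^ 2) ∣ (lam : ℤ))) := by
  obtain ⟨hcard, hm2, hkcard, hdisj, heq⟩ := h
  set n := Fintype.card G with hn
  have hn0 : n ≠ 0 := Fintype.card_ne_zero
  -- character values are roots of unity, hence algebraic integers
  have hroot : ∀ g : G, χ g ^ n = 1 := fun g => by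
    rw [← map_pow, pow_card_eq_one, map_one]
  have hint : ∀ g : G, IsIntegral ℤ (χ g) := fun g =>
    isIntegral_of_pow_eq_one hn0 (hroot g)
  have hinv : ∀ g : G, χ g⁻¹ = starRingEnd ℂ (χ g) := by
    intro g
    have h1 : χ g * starRingEnd ℂ (χ g) = 1 := by
      rw [Complex.mul_conj]
      norm_cast
      have habs : ‖χ g‖ ^ n = 1 := by
        rw [← norm_pow, hroot g, norm_one]
      rcases (pow_eq_one_iff_of_ne_zero hn0).mp habs with h1 | ⟨h1, _⟩
      · simp [Complex.normSq_eq_norm_sq, h1]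
      · have : (0:ℝ) ≤ ‖χ g‖ := by positivity
        rw [h1] at this; norm_num at this
    rw [map_inv]
    exact inv_eq_of_mul_eq_one_right h1
  -- the character sums
  set z : Fin m → ℂ := fun j => ∑ d ∈ D j, χ d with hz
  set S : ℂ := ∑ j, z j with hS
  have hSbi : ∑ d ∈ Finset.univ.biUnion D, χ d = S := by
    exact Finset.sum_biUnion fun i _ j _ hij => hdisj i j hij
  have hS0 : S ≠ 0 := hSbi ▸ hχD
  -- the key character equation
  have key : ∀ j, z j * starRingEnd ℂ (S - z j) = -(lam : ℂ) := by
    intro j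
    have hlift := congrArg (MonoidAlgebra.lift ℤ ℂ G χ) (heq j)
    have h2 : (∑ d ∈ D j, χ d) * (∑ i ∈ Finset.univ.erase j, ∑ d ∈ D i, χ d⁻¹)
        = (lam : ℂ) * ((∑ g : G, χ g) - 1) := by
      simpa [map_sum, map_mul, MonoidAlgebra.lift_of, zsmul_eq_mul, mul_comm] using hlift
    rw [char_sum_zero χ hχ] at h2
    have h3 : ∑ i ∈ Finset.univ.erase j, ∑ d ∈ D i, χ d⁻¹
        = starRingEnd ℂ (S - z j) := by
      rw [← Finset.sum_erase_eq_sub (Finset.mem_univ j)] at *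
      rw [map_sum]
      refine Finset.sum_congr rfl fun i _ => ?_
      rw [map_sum]
      exact Finset.sum_congr rfl fun d _ => hinv d
    rw [h3] at h2
    rw [h2]; ring
  -- real quantities
  set s : ℝ := Complex.normSq S with hsdef
  have hs0 : (0:ℝ) < s := Complex.normSq_pos.mpr hS0
  set u : Fin m → ℝ := fun j => Complex.normSq (z j) - lam with hu
  have hzu : ∀ j, z j * starRingEnd ℂ S = ((u j : ℝ) : ℂ) := by
    intro j
    have h1 := key j
    rw [map_sub, mul_sub] at h1
    have h2 : z j * starRingEnd ℂ (z j) = ((Complex.normSq (z j) : ℝ) : ℂ) :=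
      Complex.mul_conj _
    rw [hu]
    push_cast
    linear_combination h1 + h2
  have hquad : ∀ j, (u j + lam) * s = u j ^ 2 := by
    intro j
    have h1 := congrArg Complex.normSq (hzu j)
    rw [map_mul, Complex.normSq_conj, Complex.normSq_ofReal] at h1
    have h2 : Complex.normSq (z j) = u j + lam := by rw [hu]; ring
    rw [h2] at h1
    linear_combination h1
  -- translate hrat into an algebraic identity for s
  rw [hSbi] at hrat
  have habs2 : ‖S‖ ^ 2 = s := Complex.sq_norm S
  rw [habs2] at hrat
  have hs_nonneg : (0:ℝ) ≤ 1 + 4 * lam / s := by positivity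
  have hsq : 1 + 4 * (lam:ℝ) / s = ((b:ℝ) / a) ^ 2 := by
    rw [← hrat, Real.sq_sqrt hs_nonneg]
  have ha' : (0:ℝ) < a := by exact_mod_cast ha
  have hb' : (0:ℝ) < b := by exact_mod_cast ha.trans hab
  have h2a : (2:ℝ) * a ≠ 0 := by positivity
  have hseq : s * ((b:ℝ)^2 - (a:ℝ)^2) = 4 * (a:ℝ)^2 * lam := by
    have h1 : (1 + 4 * (lam:ℝ) / s) * (s * (a:ℝ)^2) = ((b:ℝ)/a)^2 * (s * (a:ℝ)^2) := by
      rw [hsq]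
    have hsa : s * (a:ℝ)^2 ≠ 0 := by positivity
    have h2 : (s * (a:ℝ)^2) * ((s + 4*(lam:ℝ)) * (a:ℝ)^2) = (s * (a:ℝ)^2) * ((b:ℝ)^2 * s) := by
      field_simp at h1
      linear_combination (s * (a:ℝ)^2) * h1
    have h3 := mul_left_cancel₀ hsa h2
    linear_combination (-1 : ℝ) * h3
  -- the two possible values of u j
  set p : ℝ := s * ((a:ℝ) + b) / (2 * a) with hp
  set q : ℝ := s * ((a:ℝ) - b) / (2 * a) with hqdef
  have hp2a : p * (2 * (a:ℝ)) = s * ((a:ℝ) + b) := by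
    rw [hp, div_mul_cancel₀ _ h2a]
  have hq2a : q * (2 * (a:ℝ)) = s * ((a:ℝ) - b) := by
    rw [hqdef, div_mul_cancel₀ _ h2a]
  have hval : ∀ j, u j = p ∨ u j = q := by
    intro j
    have hfac0 : ((u j - p) * (u j - q)) * (4 * (a:ℝ)^2) = 0 := by
      linear_combination (-4*(a:ℝ)^2) * hquad j + (2*(a:ℝ)*q - 2*(a:ℝ)*(u j)) * hp2a
        + (s*((a:ℝ)+(b:ℝ)) - 2*(a:ℝ)*(u j)) * hq2a - s * hseq
    have h4a : (4 * (a:ℝ)^2) ≠ 0 := by positivity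
    rcases mul_eq_zero.mp hfac0 with h | h
    · rcases mul_eq_zero.mp h with h' | h'
      · exact Or.inl (by linarith [sub_eq_zero.mp h'])
      · exact Or.inr (by linarith [sub_eq_zero.mp h'])
    · exact absurd h h4a
  -- sum of the u j equals s
  have hsum : ∑ j, u j = s := by
    have h1 : ((∑ j, u j : ℝ) : ℂ) = ((s:ℝ) : ℂ) := by
      push_cast
      calc (∑ j, ((u j : ℝ) : ℂ)) = ∑ j, z j * starRingEnd ℂ S :=
            Finset.sum_congr rfl fun j _ => (hzu j).symm
        _ = S * starRingEnd ℂ S := by rw [← Finset.sum_mul]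
        _ = ((s:ℝ):ℂ) := Complex.mul_conj S
    exact_mod_cast h1
  -- counting
  set P : Finset (Fin m) := Finset.univ.filter (fun j => u j = p) with hP
  set l : ℕ := P.card with hl
  have hql : ∀ j ∉ P, u j = q := by
    intro j hj
    rcases hval j with h | h
    · exact absurd (Finset.mem_filter.mpr ⟨Finset.mem_univ j, h⟩) hj
    · exact h
  have hlm : l ≤ m := by
    simpa using Finset.card_le_card (Finset.subset_univ P)
  have hsplit : (l : ℝ) * p + ((m : ℝ) - l) * q = s := by
    have h1 : ∑ j ∈ P, u j = (l : ℝ) * p := by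
      rw [Finset.sum_congr rfl (fun j hj => (Finset.mem_filter.mp hj).2),
        Finset.sum_const, nsmul_eq_mul]
    have hcc : (Pᶜ.card : ℝ) = (m : ℝ) - l := by
      rw [Finset.card_compl, Fintype.card_fin, Nat.cast_sub hlm]
    have h2 : ∑ j ∈ Pᶜ, u j = ((m:ℝ) - l) * q := by
      rw [Finset.sum_congr rfl (fun j hj => hql j (Finset.mem_compl.mp hj)),
        Finset.sum_const, nsmul_eq_mul, hcc]
    have h3 := Finset.sum_add_sum_compl P u
    rw [h1, h2, hsum] at h3
    linarith
  -- the integer counting identity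
  have hcount : (l : ℤ) * ((a:ℤ) + b) + ((m:ℤ) - l) * ((a:ℤ) - b) = 2 * a := by
    have hreal : (l : ℝ) * ((a:ℝ) + b) + ((m:ℝ) - l) * ((a:ℝ) - b) = 2 * a := by
      have h1 : ((l : ℝ) * ((a:ℝ) + b) + ((m:ℝ) - l) * ((a:ℝ) - b)) * s = 2 * a * s := by
        linear_combination (2*(a:ℝ)) * hsplit - (l:ℝ) * hp2a - ((m:ℝ) - (l:ℝ)) * hq2a
      exact mul_right_cancel₀ hs0.ne' h1
    exact_mod_cast hreal
  have hkey1 : (b:ℤ) * m - (a:ℤ) * ((m:ℤ) - 2) = 2 * b * l := by linarith [hcount]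
  -- bounds on l
  have hm' : (2:ℤ) < m := by exact_mod_cast hm
  have ha'' : (0:ℤ) < a := by exact_mod_cast ha
  have hab'' : (a:ℤ) < b := by exact_mod_cast hab
  have hl_pos : 0 < l := by
    rcases Nat.eq_zero_or_pos l with h0 | h
    · exfalso
      rw [h0] at hkey1
      push_cast at hkey1
      nlinarith [hkey1]
    · exact h
  have hl_lt : l < m := by
    by_contra hc
    push_neg at hc
    have hc' : (m:ℤ) ≤ l := by exact_mod_cast hc
    nlinarith [hkey1]
  -- integrality facts
  have hzint : ∀ j, IsIntegral ℤ (z j) := by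
    intro j
    rw [hz]
    exact (integralClosure ℤ ℂ).sum_mem (fun d _ => hint d)
  have hzcint : ∀ j, IsIntegral ℤ (starRingEnd ℂ (z j)) := by
    intro j
    have heq2 : starRingEnd ℂ (z j) = ∑ d ∈ D j, χ d⁻¹ := by
      rw [hz, map_sum]
      exact Finset.sum_congr rfl fun d _ => (hinv d).symm
    rw [heq2]
    exact (integralClosure ℤ ℂ).sum_mem (fun d _ => hint _)
  have hnsqint : ∀ j, IsIntegral ℤ ((Complex.normSq (z j) : ℝ) : ℂ) := by
    intro j
    rw [← Complex.mul_conj]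
    exact (hzint j).mul (hzcint j)
  have hSint : IsIntegral ℤ ((s : ℝ) : ℂ) := by
    rw [hsdef, ← Complex.mul_conj]
    refine IsIntegral.mul ?_ ?_
    · rw [hS]; exact (integralClosure ℤ ℂ).sum_mem (fun j _ => hzint j)
    · rw [hS, map_sum]
      exact (integralClosure ℤ ℂ).sum_mem (fun j _ => hzcint j)
  have hbar : ((b:ℝ) - a) ≠ 0 := by
    have : (a:ℝ) < b := by exact_mod_cast hab
    intro hc; linarith
  have hbar' : ((b:ℝ) + a) ≠ 0 := by positivity
  have hbaq : ((b:ℚ) - a) ≠ 0 := by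
    have : (a:ℚ) < b := by exact_mod_cast hab
    intro hc; linarith
  have hbaq' : ((b:ℚ) + a) ≠ 0 := by positivity
  have hcoab : IsCoprime (a:ℤ) (b:ℤ) := Nat.isCoprime_iff_coprime.mpr hco
  -- (1)
  have part1a : (2 * b : ℤ) ∣ (b : ℤ) * m - (a : ℤ) * ((m : ℤ) - 2) := ⟨l, hkey1⟩
  have part1b : (b : ℤ) ∣ (m : ℤ) - 2 := by
    have hd : (b:ℤ) ∣ ((m:ℤ) - 2) * a := ⟨(m:ℤ) - 2*l, by linarith [hcount]⟩
    exact (hcoab.symm).dvd_of_dvd_mul_right hd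
  -- (2) first part
  have part2a : ((b:ℤ) - a) ∣ ((b:ℤ) + a) * lam := by
    obtain ⟨j, hj⟩ := Finset.card_pos.mp hl_pos
    have hju : u j = p := (Finset.mem_filter.mp hj).2
    have hval1 : Complex.normSq (z j) = ((b:ℝ) + a) * lam / ((b:ℝ) - a) := by
      rw [eq_div_iff hbar]
      have h2 : Complex.normSq (z j) = u j + lam := by rw [hu]; ring
      rw [h2, hju]
      have hgoal2 : ((p + lam) * ((b:ℝ) - a)) * (2*(a:ℝ)) = (((b:ℝ) + a) * lam) * (2*(a:ℝ)) := by
        linear_combination ((b:ℝ) - a) * hp2a + hseq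
      exact mul_right_cancel₀ h2a hgoal2
    have hqc : (((((b:ℚ) + a) * lam / ((b:ℚ) - a)) : ℚ) : ℂ) = ((Complex.normSq (z j) : ℝ) : ℂ) := by
      rw [hval1]; push_cast; norm_num
    obtain ⟨y, hy⟩ := rat_of_intIntegral (hnsqint j) hqc
    refine ⟨y, ?_⟩
    have hq2 : ((b:ℚ) + a) * lam = ((b:ℚ) - a) * y := by
      rw [hy]; field_simp
    exact_mod_cast hq2
  -- (2) second part
  have part2b : ((b:ℤ) + a) ∣ ((b:ℤ) - a) * lam := by
    have hne : Pᶜ.Nonempty := by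
      rw [← Finset.card_pos, Finset.card_compl, Fintype.card_fin]
      omega
    obtain ⟨j, hj⟩ := hne
    have hju : u j = q := hql j (Finset.mem_compl.mp hj)
    have hval1 : Complex.normSq (z j) = ((b:ℝ) - a) * lam / ((b:ℝ) + a) := by
      rw [eq_div_iff hbar']
      have h2 : Complex.normSq (z j) = u j + lam := by rw [hu]; ring
      rw [h2, hju]
      have hgoal2 : ((q + lam) * ((b:ℝ) + a)) * (2*(a:ℝ)) = (((b:ℝ) - a) * lam) * (2*(a:ℝ)) := by
        linear_combination ((b:ℝ) + a) * hq2a - hseq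
      exact mul_right_cancel₀ h2a hgoal2
    have hqc : (((((b:ℚ) - a) * lam / ((b:ℚ) + a)) : ℚ) : ℂ) = ((Complex.normSq (z j) : ℝ) : ℂ) := by
      rw [hval1]; push_cast; norm_num
    obtain ⟨y, hy⟩ := rat_of_intIntegral (hnsqint j) hqc
    refine ⟨y, ?_⟩
    have hq2 : ((b:ℚ) - a) * lam = ((b:ℚ) + a) * y := by
      rw [hy]; field_simp
    exact_mod_cast hq2
  -- (3)
  have hbbaa : ((b:ℝ)^2 - (a:ℝ)^2) ≠ 0 := by
    intro hc
    have h1 : ((b:ℝ) + a) * ((b:ℝ) - a) = 0 := by linarith [hc]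
    rcases mul_eq_zero.mp h1 with h | h
    · exact hbar' h
    · exact hbar h
  have hbbaaq : ((b:ℚ)^2 - (a:ℚ)^2) ≠ 0 := by
    intro hc
    have h1 : ((b:ℚ) + a) * ((b:ℚ) - a) = 0 := by linarith [hc]
    rcases mul_eq_zero.mp h1 with h | h
    · exact hbaq' h
    · exact hbaq h
  have part3a : ((b:ℤ)^2 - (a:ℤ)^2) ∣ 4 * lam := by
    have hvs : s = 4 * (a:ℝ)^2 * lam / ((b:ℝ)^2 - (a:ℝ)^2) := by
      rw [eq_div_iff hbbaa]; linarith [hseq]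
    have hqc : ((((4:ℚ) * (a:ℚ)^2 * lam / ((b:ℚ)^2 - (a:ℚ)^2)) : ℚ) : ℂ) = ((s : ℝ) : ℂ) := by
      rw [hvs]; push_cast; norm_num
    obtain ⟨y, hy⟩ := rat_of_intIntegral hSint hqc
    have hq2 : (4:ℚ) * (a:ℚ)^2 * lam = ((b:ℚ)^2 - (a:ℚ)^2) * y := by
      rw [hy]; field_simp
    have hz2 : (4:ℤ) * (a:ℤ)^2 * lam = ((b:ℤ)^2 - (a:ℤ)^2) * y := by exact_mod_cast hq2
    have hd : ((b:ℤ)^2 - (a:ℤ)^2) ∣ (4 * (lam:ℤ)) * (a:ℤ)^2 := ⟨y, by linarith [hz2]⟩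
    have hco2 : IsCoprime ((a:ℤ)^2) ((b:ℤ)^2 - (a:ℤ)^2) := by
      have h1 := (hcoab.pow : IsCoprime ((a:ℤ)^2) ((b:ℤ)^2))
      have h2 := h1.add_mul_left_right (-1)
      have : (b:ℤ)^2 + (a:ℤ)^2 * (-1) = (b:ℤ)^2 - (a:ℤ)^2 := by ring
      rwa [this] at h2
    exact (hco2.symm).dvd_of_dvd_mul_right hd
  have part3b : Odd (b + a) → ((b:ℤ)^2 - (a:ℤ)^2) ∣ (lam : ℤ) := by
    intro hodd
    have h1 : Odd ((b:ℤ) + a) := by exact_mod_cast hodd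
    obtain ⟨t, ht⟩ := id h1
    have h2 : Odd ((b:ℤ) - a) := ⟨t - a, by linarith⟩
    have h3 : Odd ((b:ℤ)^2 - (a:ℤ)^2) := by
      have heq3 : (b:ℤ)^2 - (a:ℤ)^2 = ((b:ℤ) + a) * ((b:ℤ) - a) := by ring
      rw [heq3]; exact h1.mul h2
    obtain ⟨w, hw⟩ := h3
    have hc2 : IsCoprime ((b:ℤ)^2 - (a:ℤ)^2) 2 := ⟨1, -w, by rw [hw]; ring⟩
    have hc4 : IsCoprime ((b:ℤ)^2 - (a:ℤ)^2) 4 := by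
      have := hc2.mul_right hc2
      norm_num at this
      exact this
    exact hc4.dvd_of_dvd_mul_left part3a
  exact ⟨⟨part1a, part1b⟩, ⟨part2a, part2b⟩, part3a, part3b⟩
end

section
/- There does not exist a nontrivial (v,m,k,λ)-SEDF in any abelian group for m = 3 or m = 4. -/
open Finset

lemma sedf_complex_aux {m : ℕ} (hm : m = 3 ∨ m = 4) (lam : ℝ) (hlam : 0 < lam)
    (x : Fin m → ℂ) (δ : ℂ) (hδ : ∑ j, x j = δ) (hδ0 : δ ≠ 0)
    (key : ∀ j, x j * (starRingEnd ℂ) (δ - x j) = -(lam : ℂ)) : False := by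
  classical
  have hs : 0 < Complex.normSq δ := Complex.normSq_pos.mpr hδ0
  obtain ⟨t, ht⟩ : ∃ t : Fin m → ℝ, ∀ j, t j = (Complex.normSq (x j) - lam) / Complex.normSq δ :=
    ⟨_, fun _ => rfl⟩
  have hconj : (starRingEnd ℂ) δ ≠ 0 := by simpa using hδ0
  have hx : ∀ j, x j = (t j : ℂ) * δ := by
    intro j
    have h2 := key j
    rw [map_sub, mul_sub, Complex.mul_conj] at h2
    have h1 : x j * (starRingEnd ℂ) δ = ((Complex.normSq (x j) : ℂ)) - (lam : ℂ) := by
      linear_combination h2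
    apply mul_right_cancel₀ hconj
    rw [h1, mul_assoc, Complex.mul_conj, ← Complex.ofReal_mul]
    have h3 : t j * Complex.normSq δ = Complex.normSq (x j) - lam := by
      rw [ht j]; exact div_mul_cancel₀ _ hs.ne'
    rw [h3]
    push_cast
    ring
  obtain ⟨c, hc_def⟩ : ∃ c : ℝ, c = lam / Complex.normSq δ := ⟨_, rfl⟩
  have hc : 0 < c := hc_def ▸ div_pos hlam hs
  have hq' : ∀ j, t j ^ 2 - t j = c := by
    intro j
    have h2 := key j
    rw [hx j] at h2
    rw [map_sub, map_mul, Complex.conj_ofReal] at h2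
    have hcs : c * Complex.normSq δ = lam := by rw [hc_def]; exact div_mul_cancel₀ _ hs.ne'
    have hreal : ((t j ^ 2 - t j) * Complex.normSq δ : ℝ) = ((c * Complex.normSq δ : ℝ)) := by
      have : (((t j ^ 2 - t j) * Complex.normSq δ : ℝ) : ℂ) = ((c * Complex.normSq δ : ℝ) : ℂ) := by
        push_cast [hcs]
        rw [← Complex.mul_conj δ]
        linear_combination -h2
      exact_mod_cast this
    exact mul_right_cancel₀ hs.ne' hreal
  have hsum : ∑ j, t j = 1 := by
    have h2 : ((∑ j, t j : ℝ) : ℂ) * δ = 1 * δ := by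
      rw [one_mul, Complex.ofReal_sum, Finset.sum_mul]
      conv_rhs => rw [← hδ]
      exact Finset.sum_congr rfl fun j _ => (hx j).symm
    have := mul_right_cancel₀ hδ0 h2
    exact_mod_cast this
  have hq2 : (Real.sqrt (1 + 4 * c)) ^ 2 = 1 + 4 * c := Real.sq_sqrt (by positivity)
  obtain ⟨r, hr_def⟩ : ∃ r : ℝ, r = (1 + Real.sqrt (1 + 4 * c)) / 2 := ⟨_, rfl⟩
  have hr1 : 1 < r := by
    have h0 : 0 ≤ Real.sqrt (1 + 4 * c) := Real.sqrt_nonneg _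
    rw [hr_def]; nlinarith [hq2]
  have hr2 : r ^ 2 - r = c := by rw [hr_def]; linear_combination hq2 / 4
  have hdich : ∀ j, t j = r ∨ t j = 1 - r := by
    intro j
    have h0 : (t j - r) * (t j - (1 - r)) = 0 := by linear_combination (hq' j) - hr2
    rcases mul_eq_zero.mp h0 with h | h
    · exact Or.inl (by linarith [sub_eq_zero.mp h])
    · exact Or.inr (by linarith [sub_eq_zero.mp h])
  have hcard : (univ.filter (fun j => t j = r)).card
      + (univ.filter (fun j => ¬ t j = r)).card = m := by
    rw [Finset.card_filter_add_card_filter_not, Finset.card_univ, Fintype.card_fin]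
  have e1 : ∑ j ∈ univ.filter (fun j => t j = r), t j
      = ((univ.filter (fun j => t j = r)).card : ℝ) * r := by
    rw [Finset.sum_congr rfl (fun j hj => (Finset.mem_filter.mp hj).2), Finset.sum_const,
      nsmul_eq_mul]
  have e2 : ∑ j ∈ univ.filter (fun j => ¬ t j = r), t j
      = ((univ.filter (fun j => ¬ t j = r)).card : ℝ) * (1 - r) := by
    rw [Finset.sum_congr rfl (fun j hj => ?_), Finset.sum_const, nsmul_eq_mul]
    rcases hdich j with h | h
    · exact absurd h (Finset.mem_filter.mp hj).2
    · exact h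
  have hsum2 : ((univ.filter (fun j => t j = r)).card : ℝ) * r
      + ((univ.filter (fun j => ¬ t j = r)).card : ℝ) * (1 - r) = 1 := by
    rw [← e1, ← e2, Finset.sum_filter_add_sum_filter_not univ (fun j => t j = r), hsum]
  obtain ⟨p, q, hpq, hEq⟩ : ∃ p q : ℕ, p + q = m ∧ (p : ℝ) * r + (q : ℝ) * (1 - r) = 1 :=
    ⟨_, _, hcard, hsum2⟩
  rcases hm with rfl | rfl
  · have hp : p ≤ 3 := by omega
    have hq : q ≤ 3 := by omega
    interval_cases p <;> interval_cases q <;> first | omega | (push_cast at hEq; linarith)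
  · have hp : p ≤ 4 := by omega
    have hq : q ≤ 4 := by omega
    interval_cases p <;> interval_cases q <;> first | omega | (push_cast at hEq; linarith)

lemma sedf_char_eq {G : Type} [CommGroup G] [Fintype G] [DecidableEq G]
    {m lam : ℕ} {D : Fin m → Finset G} {A : Type} [CommRing A] (χ : G →* A)
    (j : Fin m)
    (h5 : (∑ d ∈ D j, MonoidAlgebra.of ℤ G d) *
      (∑ i ∈ Finset.univ.erase j, ∑ d ∈ D i, MonoidAlgebra.of ℤ G d⁻¹)
    = (lam : ℤ) • ((∑ g : G, MonoidAlgebra.of ℤ G g) - 1)) :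
    (∑ d ∈ D j, χ d) * (∑ i ∈ Finset.univ.erase j, ∑ d ∈ D i, χ d⁻¹)
      = (lam : A) * ((∑ g : G, χ g) - 1) := by
  have := congrArg (MonoidAlgebra.lift ℤ A G χ) h5
  simpa [map_sum, MonoidAlgebra.lift_of, zsmul_eq_mul] using this


theorem no_sedf_m_three_four {G : Type} [CommGroup G] [Fintype G]
    [DecidableEq G] {v m k lam : ℕ} (hm : m = 3 ∨ m = 4)
    (D : Fin m → Finset G) (h : IsSEDF v m k lam D) (hk : 1 < k) :
    False := by
  classical
  obtain ⟨h1, h2, h3, h4, h5⟩ := h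
  have hm3 : 3 ≤ m := by omega
  obtain ⟨j0, hj0⟩ : ∃ j0 : Fin m, True := ⟨⟨0, by omega⟩, trivial⟩
  -- Step B : m * k ≤ v
  have hBle : m * k ≤ v := by
    have hdisj : ((univ : Finset (Fin m)).biUnion D).card = ∑ i, (D i).card :=
      Finset.card_biUnion (fun i _ j _ hij => h4 i j hij)
    have : ∑ i : Fin m, (D i).card = m * k := by simp [h3, mul_comm]
    calc m * k = ((univ : Finset (Fin m)).biUnion D).card := by rw [hdisj, this]
      _ ≤ Fintype.card G := Finset.card_le_card (Finset.subset_univ _)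
      _ = v := h1
  have hv1 : 1 < v := by rcases hm with rfl | rfl <;> omega
  -- Step A : augmentation identity
  have hAZ : (k : ℤ) * (((m : ℤ) - 1) * k) = (lam : ℤ) * ((v : ℤ) - 1) := by
    have := sedf_char_eq (A := ℤ) 1 j0 (h5 j0)
    simp only [MonoidHom.one_apply, Finset.sum_const, nsmul_eq_mul, mul_one, h3,
      Finset.card_erase_of_mem (Finset.mem_univ j0), Finset.card_univ, Fintype.card_fin,
      h1] at this
    push_cast [Nat.cast_sub (show 1 ≤ m by omega)] at this
    linarith [this]
  have hAn : k * ((m - 1) * k) = lam * (v - 1) := by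
    zify [show 1 ≤ m by omega, show 1 ≤ v by omega]
    linarith [hAZ]
  have hlam : 0 < lam := by
    rcases Nat.eq_zero_or_pos lam with h0 | h
    · rw [h0, zero_mul] at hAn
      have : 0 < k * ((m - 1) * k) :=
        Nat.mul_pos (by omega) (Nat.mul_pos (by omega) (by omega))
      omega
    · exact h
  -- case split on existence of a nontrivial character not vanishing on D
  by_cases hex : ∃ ψ : AddChar (Additive G) ℂ, ψ ≠ 0 ∧
      (∑ j, ∑ d ∈ D j, ψ (Additive.ofMul d)) ≠ 0
  · obtain ⟨ψ, hψ0, hδ0⟩ := hex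
    set χ : G →* ℂ :=
      { toFun := fun g => ψ (Additive.ofMul g)
        map_one' := ψ.map_zero_eq_one
        map_mul' := fun a b => ψ.map_add_eq_mul a b } with hχ
    set x : Fin m → ℂ := fun j => ∑ d ∈ D j, ψ (Additive.ofMul d) with hx
    set δ : ℂ := ∑ j, x j with hδ
    have hsum0 : ∑ g : G, ψ (Additive.ofMul g) = 0 := by
      have h0 : ∑ a : Additive G, ψ a = 0 := AddChar.sum_eq_zero_iff_ne_zero.mpr hψ0
      rw [← h0]
      exact Fintype.sum_equiv Additive.ofMul _ _ (fun g => rfl)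
    have key : ∀ j, x j * (starRingEnd ℂ) (δ - x j) = -((lam : ℝ) : ℂ) := by
      intro j
      have hc := sedf_char_eq (A := ℂ) χ j (h5 j)
      have hχd : ∀ d : G, χ d = ψ (Additive.ofMul d) := fun d => rfl
      have hinv' : ∀ d : G, ψ (Additive.ofMul d⁻¹) = (starRingEnd ℂ) (ψ (Additive.ofMul d)) := by
        intro d; rw [ofMul_inv, AddChar.map_neg_eq_conj]
      simp only [hχd, hinv', hsum0] at hc
      have hsecond : ∑ i ∈ Finset.univ.erase j, ∑ d ∈ D i,
          (starRingEnd ℂ) (ψ (Additive.ofMul d)) = (starRingEnd ℂ) (δ - x j) := by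
        have e1 : ∀ i : Fin m, ∑ d ∈ D i, (starRingEnd ℂ) (ψ (Additive.ofMul d))
            = (starRingEnd ℂ) (x i) := fun i => (map_sum _ _ _).symm
        rw [Finset.sum_congr rfl fun i _ => e1 i, ← map_sum,
          Finset.sum_erase_eq_sub (Finset.mem_univ j), ← hδ]
      rw [hsecond] at hc
      have hxj : x j = ∑ d ∈ D j, ψ (Additive.ofMul d) := rfl
      rw [← hxj] at hc
      rw [hc]
      push_cast
      ring
    exact sedf_complex_aux hm (lam : ℝ) (by exact_mod_cast hlam) x δ rfl hδ0 key
  · push_neg at hex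
    -- every nontrivial character vanishes on D; conclude v = m * k
    have hS1 : ∑ ψ : AddChar (Additive G) ℂ, ∑ j, ∑ d ∈ D j, ψ (Additive.ofMul d)
        = ∑ j : Fin m, if (1 : G) ∈ D j then (v : ℂ) else 0 := by
      rw [Finset.sum_comm]
      refine Finset.sum_congr rfl fun j _ => ?_
      rw [Finset.sum_comm]
      have : ∀ d ∈ D j, ∑ ψ : AddChar (Additive G) ℂ, ψ (Additive.ofMul d)
          = if d = 1 then (v : ℂ) else 0 := by
        intro d _
        rw [AddChar.sum_apply_eq_ite]
        have hcardA : Fintype.card (Additive G) = v := by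
          rw [← h1]; exact Fintype.card_congr Additive.toMul
        simp [ofMul_eq_zero, hcardA]
      rw [Finset.sum_congr rfl this]
      rw [Finset.sum_ite_eq' (D j) (1 : G) (fun _ => (v : ℂ))]
    have hS2 : ∑ ψ : AddChar (Additive G) ℂ, ∑ j, ∑ d ∈ D j, ψ (Additive.ofMul d)
        = (m : ℂ) * k := by
      rw [Finset.sum_eq_single_of_mem (0 : AddChar (Additive G) ℂ) (Finset.mem_univ _)
        (fun ψ _ hne => hex ψ hne)]
      simp [h3, Finset.card_univ]
    have hn : ∃ n : ℕ, n ≤ 1 ∧ n * v = m * k := by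
      refine ⟨(univ.filter (fun j : Fin m => (1 : G) ∈ D j)).card, ?_, ?_⟩
      · rw [Finset.card_le_one]
        intro a ha b hb
        by_contra hne
        exact Finset.disjoint_left.mp (h4 a b hne) (Finset.mem_filter.mp ha).2
          (Finset.mem_filter.mp hb).2
      · have : ((univ.filter (fun j : Fin m => (1 : G) ∈ D j)).card : ℂ) * v = (m : ℂ) * k := by
          rw [← hS2, hS1, Finset.sum_ite, Finset.sum_const_zero, add_zero, Finset.sum_const,
            nsmul_eq_mul]
        exact_mod_cast this
    obtain ⟨n, hn1, hnv⟩ := hn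
    have hveq : v = m * k := by
      interval_cases n
      · simp at hnv
        rcases hm with rfl | rfl <;> omega
      · omega
    -- number theory finish
    subst hveq
    have hAn2 : lam * (m * k - 1) = (m - 1) * k ^ 2 := by
      rw [← hAn]; ring
    have hco : Nat.Coprime (m * k - 1) k := by
      have hg1 : Nat.gcd (m * k - 1) k ∣ m * k - 1 := Nat.gcd_dvd_left _ _
      have hg2 : Nat.gcd (m * k - 1) k ∣ m * k := (Nat.gcd_dvd_right _ _).mul_left m
      have := Nat.dvd_sub hg2 hg1
      have hone : m * k - (m * k - 1) = 1 := by
        have : 1 ≤ m * k := by rcases hm with rfl | rfl <;> omega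
        omega
      rw [hone] at this
      exact Nat.dvd_one.mp this
    have hdvd : (m * k - 1) ∣ (m - 1) * k ^ 2 := ⟨lam, by rw [← hAn2]; ring⟩
    have hdvd2 : (m * k - 1) ∣ (m - 1) :=
      (Nat.Coprime.dvd_of_dvd_mul_right (hco.pow_right 2)) hdvd
    have hle := Nat.le_of_dvd (by omega) hdvd2
    rcases hm with rfl | rfl <;> omega
end

section
/- Let p be a prime and H a finite abelian p-group. Let E = ∑_{h∈H} c_h·h ∈ ℤ[H] with all c_h ≥ 0 and ∑_h c_h = u. Suppose some character χ of H satisfies |χ(E)|² = ℓ for an integer ℓ. Then u² + (p−1)ℓ = p·r for some integer r ≥ u. -/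
open Finset

theorem pgroup_char_value_residue (p : ℕ) (hp : p.Prime)
    (H : Type) [CommGroup H] [Fintype H] (hH : IsPGroup p H)
    (c : H → ℕ) (χ : H →* ℂ) (ℓ : ℤ)
    (hl : ‖∑ h : H, (c h : ℂ) * χ h‖ ^ 2 = (ℓ : ℝ)) :
    ∃ r : ℤ, (∑ h : H, (c h : ℤ)) ^ 2 + ((p : ℤ) - 1) * ℓ = p * r ∧
      (∑ h : H, (c h : ℤ)) ≤ r := by
  classical
  have hfact : Fact p.Prime := ⟨hp⟩
  obtain ⟨n, hcard⟩ := IsPGroup.iff_card.mp hH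
  set N := p ^ (n + 1) with hNdef
  have hN : N ≠ 0 := pow_ne_zero _ hp.pos.ne'
  have hNe : NeZero N := ⟨hN⟩
  have hNpos : 0 < N := Nat.pos_of_ne_zero hN
  set A := p ^ n with hAdef
  have hApos : 0 < A := pow_pos hp.pos n
  have hNA : N = A * p := by rw [hNdef, hAdef, pow_succ]
  -- every character value is an N-th root of unity
  have hχpow : ∀ k : H, χ k ^ N = 1 := by
    intro k
    have h1 : k ^ N = 1 := by
      have hc : k ^ Fintype.card H = 1 := pow_card_eq_one
      have hcard' : Fintype.card H = p ^ n := by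
        rw [Nat.card_eq_fintype_card] at hcard; exact hcard
      rw [hNdef, pow_succ, pow_mul, ← hcard', hc, one_pow]
    rw [← map_pow, h1, map_one]
  set ζ := Complex.exp (2 * Real.pi * Complex.I / N) with hζdef
  have hζ : IsPrimitiveRoot ζ N := Complex.isPrimitiveRoot_exp N hN
  have hex : ∀ k : H, ∃ i, i < N ∧ ζ ^ i = χ k := by
    intro k
    obtain ⟨i, hi, hie⟩ := hζ.eq_pow_of_pow_eq_one (hχpow k)
    exact ⟨i, hi, hie⟩
  choose a ha1 ha2 using hex
  have ha0 : a 1 = 0 := by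
    have h1 : ζ ^ a 1 = 1 := by rw [ha2, map_one]
    have hdvd : N ∣ a 1 := hζ.dvd_of_pow_eq_one _ h1
    exact Nat.eq_zero_of_dvd_of_lt hdvd (ha1 1)
  set F : Polynomial ℤ :=
    ∑ g : H, ∑ h : H, Polynomial.C ((c g : ℤ) * (c h : ℤ)) * Polynomial.X ^ (a (g * h⁻¹)) with hF
  have hFcoeff : ∀ m : ℕ, F.coeff m =
      ∑ g : H, ∑ h : H, if m = a (g * h⁻¹) then (c g : ℤ) * (c h : ℤ) else 0 := by
    intro m
    rw [hF]
    simp only [Polynomial.finset_sum_coeff, Polynomial.coeff_C_mul, Polynomial.coeff_X_pow,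
      mul_ite, mul_one, mul_zero]
  have hFnn : ∀ m : ℕ, 0 ≤ F.coeff m := by
    intro m
    rw [hFcoeff]
    refine Finset.sum_nonneg fun g _ => Finset.sum_nonneg fun h _ => ?_
    split
    · positivity
    · exact le_refl 0
  have hFhigh : ∀ m : ℕ, N ≤ m → F.coeff m = 0 := by
    intro m hm
    rw [hFcoeff]
    refine Finset.sum_eq_zero fun g _ => Finset.sum_eq_zero fun h _ => ?_
    rw [if_neg]
    intro hmeq
    have := ha1 (g * h⁻¹)
    omega
  have hF0 : (∑ h : H, (c h : ℤ)) ≤ F.coeff 0 := by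
    rw [hFcoeff 0]
    have hstep : ∀ g : H, (c g : ℤ) ≤
        ∑ h : H, if 0 = a (g * h⁻¹) then (c g : ℤ) * (c h : ℤ) else 0 := by
      intro g
      have hsingle : ((if 0 = a (g * g⁻¹) then (c g : ℤ) * (c g : ℤ) else 0)) ≤
          ∑ h : H, if 0 = a (g * h⁻¹) then (c g : ℤ) * (c h : ℤ) else 0 := by
        refine Finset.single_le_sum
          (f := fun h => if 0 = a (g * h⁻¹) then (c g : ℤ) * (c h : ℤ) else 0)
          (fun h _ => ?_) (Finset.mem_univ g)
        split
        · positivity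
        · exact le_refl 0
      have hgg : g * g⁻¹ = 1 := mul_inv_cancel g
      rw [hgg, ha0, if_pos rfl] at hsingle
      have h0 : (0 : ℤ) ≤ (c g : ℤ) := Int.natCast_nonneg _
      nlinarith
    exact Finset.sum_le_sum fun g _ => hstep g
  have hFeval1 : F.eval 1 = (∑ h : H, (c h : ℤ)) ^ 2 := by
    rw [hF]
    simp only [Polynomial.eval_finset_sum, Polynomial.eval_mul, Polynomial.eval_C,
      Polynomial.eval_pow, Polynomial.eval_X, one_pow, mul_one]
    rw [sq, Finset.sum_mul_sum]
  -- the complex evaluation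
  have habs : ∀ k : H, ‖χ k‖ = 1 := by
    intro k
    exact Complex.norm_eq_one_of_pow_eq_one (hχpow k) hN
  have hconj : ∀ k : H, (starRingEnd ℂ) (χ k) = χ k⁻¹ := by
    intro k
    have h1 : χ k⁻¹ * χ k = 1 := by rw [← map_mul, inv_mul_cancel, map_one]
    have h2 : (starRingEnd ℂ) (χ k) * χ k = 1 := by
      rw [mul_comm, Complex.mul_conj, ← Complex.sq_norm, habs]
      norm_num
    have h3 : χ k ≠ 0 := by
      intro h0
      rw [h0, mul_zero] at h2
      exact one_ne_zero h2.symm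
    calc (starRingEnd ℂ) (χ k) = (starRingEnd ℂ) (χ k) * χ k * (χ k)⁻¹ := by
          field_simp
    _ = χ k⁻¹ * χ k * (χ k)⁻¹ := by rw [h2, h1]
    _ = χ k⁻¹ := by field_simp
  have hFeval : Polynomial.aeval ζ F = (ℓ : ℂ) := by
    have hconjS : (∑ h : H, (c h : ℂ) * (starRingEnd ℂ) (χ h))
        = (starRingEnd ℂ) (∑ h : H, (c h : ℂ) * χ h) := by
      rw [map_sum]
      exact Finset.sum_congr rfl fun h _ => by rw [map_mul, Complex.conj_natCast]
    have hterm : ∀ g : H, (Polynomial.aeval ζ)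
        (∑ h : H, Polynomial.C ((c g : ℤ) * (c h : ℤ)) * Polynomial.X ^ (a (g * h⁻¹)))
        = ∑ h : H, ((c g : ℂ) * χ g) * ((c h : ℂ) * (starRingEnd ℂ) (χ h)) := by
      intro g
      rw [map_sum]
      refine Finset.sum_congr rfl fun h _ => ?_
      rw [map_mul, Polynomial.aeval_C, map_pow, Polynomial.aeval_X, ha2]
      have hsplit : χ (g * h⁻¹) = χ g * (starRingEnd ℂ) (χ h) := by
        rw [map_mul, hconj]
      rw [hsplit]
      push_cast
      ring
    rw [hF, map_sum, Finset.sum_congr rfl fun g _ => hterm g, ← Finset.sum_mul_sum, hconjS,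
      Complex.mul_conj, ← Complex.sq_norm, hl, Complex.ofReal_intCast]
  -- divisibility by the cyclotomic polynomial
  have hintζ : IsIntegral ℤ ζ := hζ.isIntegral hNpos
  have hroot : Polynomial.aeval ζ (F - Polynomial.C ℓ) = 0 := by
    rw [map_sub, hFeval, Polynomial.aeval_C]
    simp
  have hdvd : Polynomial.cyclotomic N ℤ ∣ F - Polynomial.C ℓ := by
    rw [Polynomial.cyclotomic_eq_minpoly hζ hNpos]
    exact minpoly.isIntegrallyClosed_dvd hintζ hroot
  obtain ⟨G, hG⟩ := hdvd
  -- degree bound for G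
  have hGdeg : G.natDegree < A := by
    by_cases hG0 : G = 0
    · rw [hG0, Polynomial.natDegree_zero]; exact hApos
    · have hcycne : Polynomial.cyclotomic N ℤ ≠ 0 := Polynomial.cyclotomic_ne_zero N ℤ
      have hFCdeg : (F - Polynomial.C ℓ).natDegree ≤ N - 1 := by
        rw [Polynomial.natDegree_le_iff_coeff_eq_zero]
        intro m hm
        have hm' : N ≤ m := by omega
        rw [Polynomial.coeff_sub, hFhigh m hm', Polynomial.coeff_C,
          if_neg (by omega), sub_zero]
      have hmul : (Polynomial.cyclotomic N ℤ).natDegree + G.natDegree ≤ N - 1 := by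
        rw [← Polynomial.natDegree_mul hcycne hG0, ← hG]
        exact hFCdeg
      have hcycdeg : (Polynomial.cyclotomic N ℤ).natDegree = A * (p - 1) := by
        rw [Polynomial.natDegree_cyclotomic, hNdef, Nat.totient_prime_pow hp (Nat.succ_pos n)]
        simp [hAdef]
      rw [hcycdeg] at hmul
      have hNsplit : N = A * (p - 1) + A := by
        rw [hNA]
        have : p - 1 + 1 = p := Nat.succ_pred_eq_of_pos hp.pos
        calc A * p = A * (p - 1 + 1) := by rw [this]
        _ = A * (p - 1) + A := by ring
      omega
  have hGzero : ∀ m : ℕ, A ≤ m → G.coeff m = 0 := fun m hm =>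
    Polynomial.coeff_eq_zero_of_natDegree_lt (lt_of_lt_of_le hGdeg hm)
  -- coefficient computation for cyclotomic * G
  have hΦ : Polynomial.cyclotomic N ℤ = ∑ i ∈ Finset.range p, Polynomial.X ^ (A * i) := by
    rw [hNdef, Polynomial.cyclotomic_prime_pow_eq_geom_sum hp]
    exact Finset.sum_congr rfl fun i _ => by rw [← pow_mul, hAdef]
  have hΦG : ∀ m : ℕ, (Polynomial.cyclotomic N ℤ * G).coeff m
      = ∑ i ∈ Finset.range p, if A * i ≤ m then G.coeff (m - A * i) else 0 := by
    intro m
    rw [hΦ, Finset.sum_mul, Polynomial.finset_sum_coeff]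
    exact Finset.sum_congr rfl fun i _ => by rw [mul_comm, Polynomial.coeff_mul_X_pow']
  have hG0coeff : G.coeff 0 = F.coeff 0 - ℓ := by
    have h1 : (F - Polynomial.C ℓ).coeff 0 = F.coeff 0 - ℓ := by
      rw [Polynomial.coeff_sub, Polynomial.coeff_C_zero]
    rw [hG, hΦG 0] at h1
    rw [← h1]
    rw [Finset.sum_eq_single_of_mem 0 (Finset.mem_range.mpr hp.pos)]
    · simp
    · intro b _ hb
      rw [if_neg]
      have : 1 ≤ b := Nat.one_le_iff_ne_zero.mpr hb
      intro hle
      have : A ≤ A * b := Nat.le_mul_of_pos_right A (by omega)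
      omega
  have hGmid : ∀ j : ℕ, j < A → G.coeff j = F.coeff (A + j) := by
    intro j hj
    have h1 : (F - Polynomial.C ℓ).coeff (A + j) = F.coeff (A + j) := by
      rw [Polynomial.coeff_sub, Polynomial.coeff_C, if_neg (by omega), sub_zero]
    rw [hG, hΦG (A + j)] at h1
    rw [← h1]
    rw [Finset.sum_eq_single_of_mem 1 (Finset.mem_range.mpr hp.two_le)]
    · rw [if_pos (by omega)]
      congr 1
      omega
    · intro b _ hb
      rcases Nat.lt_or_ge b 1 with hb1 | hb2
      · have hb0 : b = 0 := by omega
        rw [hb0, if_pos (by simp)]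
        simp only [Nat.mul_zero, Nat.sub_zero]
        exact hGzero (A + j) (by omega)
      · have hb2' : 2 ≤ b := by omega
        rw [if_neg]
        have : A * 2 ≤ A * b := Nat.mul_le_mul_left A hb2'
        omega
  have hGnn : ∀ j ∈ Finset.range A, 0 ≤ G.coeff j := by
    intro j hj
    rw [hGmid j (Finset.mem_range.mp hj)]
    exact hFnn _
  -- evaluation at 1
  have hGsum : G.eval 1 = ∑ j ∈ Finset.range A, G.coeff j := by
    rw [Polynomial.eval_eq_sum_range' hGdeg]
    simp
  have hkey : (∑ h : H, (c h : ℤ)) ^ 2 - ℓ = p * G.eval 1 := by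
    have h1 := congrArg (Polynomial.eval 1) hG
    rw [Polynomial.eval_sub, Polynomial.eval_C, Polynomial.eval_mul, hFeval1] at h1
    have h2 : Polynomial.eval 1 (Polynomial.cyclotomic N ℤ) = (p : ℤ) := by
      rw [hNdef]
      exact Polynomial.eval_one_cyclotomic_prime_pow n
    rw [h2] at h1
    exact h1
  have htineq : F.coeff 0 - ℓ ≤ G.eval 1 := by
    rw [hGsum, ← hG0coeff]
    exact Finset.single_le_sum hGnn (Finset.mem_range.mpr hApos)
  refine ⟨ℓ + G.eval 1, by linear_combination hkey, by linarith⟩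
end
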